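/- arXiv:2110.02841 — 7 statements merged into one kernel-verified Lean document; each statement's English description precedes it below -/
import Mathlib

section
/- With the notation and hypotheses of the key linear-algebraic lemma (surjective $\mathbf{B}_+$, $A_j>0$, $M=\sum_j c_jB_j^*A_jB_j>0$), and with $x_*\in\mathbb{R}^n$ any element satisfying $B_jx_*=A_j^{-1}\mathbf{v}_j$ for $j=1,\dots,m_+$, the exact identity $\langle\overline{\mathbf{w}},M^{-1}\overline{\mathbf{w}}\rangle - \sum_{j=1}^m c_j\langle\mathbf{v}_j,A_j^{-1}\mathbf{v}_j\rangle = \langle\overline{\mathbf{w}}',M\overline{\mathbf{w}}'\rangle + \sum_{j=m_++1}^m |c_j|\langle\mathbf{v}_j',A_j\mathbf{v}_j'\rangle$ holds, where $\overline{\mathbf{w}}=\sum_{j=1}^m c_jB_j^*\mathbf{v}_j$, $\overline{\mathbf{w}}'=x_*-M^{-1}\overline{\mathbf{w}}$, and $\mathbf{v}_j'=B_jx_*-A_j^{-1}\mathbf{v}_j$ for $j>m_+$. -/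
open Matrix BigOperators

private lemma sdot {k : ℕ} (A : Matrix (Fin k) (Fin k) ℝ) (h : Aᵀ = A) (x y : Fin k → ℝ) :
    x ⬝ᵥ A.mulVec y = A.mulVec x ⬝ᵥ y := by
  rw [Matrix.dotProduct_mulVec, ← Matrix.mulVec_transpose, h]

private lemma dotsum {k : ℕ} {ι : Type*} (s : Finset ι) (x : Fin k → ℝ)
    (f : ι → Fin k → ℝ) : x ⬝ᵥ (∑ i ∈ s, f i) = ∑ i ∈ s, x ⬝ᵥ f i := by
  simp only [dotProduct, Finset.sum_apply, Finset.mul_sum]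
  exact Finset.sum_comm

private lemma summv {k l : ℕ} {ι : Type*} (s : Finset ι) (x : Fin l → ℝ)
    (f : ι → Matrix (Fin k) (Fin l) ℝ) :
    (∑ i ∈ s, f i).mulVec x = ∑ i ∈ s, (f i).mulVec x :=
  map_sum (Matrix.mulVec.addMonoidHomLeft x) f s

private lemma tdot {a b : ℕ} (B : Matrix (Fin a) (Fin b) ℝ) (x : Fin b → ℝ) (z : Fin a → ℝ) :
    x ⬝ᵥ Bᵀ.mulVec z = (B.mulVec x) ⬝ᵥ z := by
  rw [Matrix.dotProduct_mulVec, Matrix.vecMul_transpose]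

/-- Exact identity behind the key linear-algebraic lemma. -/
theorem stmt1 (n m mp : ℕ) (hmp : mp ≤ m) (nj : Fin m → ℕ)
    (B : ∀ j : Fin m, Matrix (Fin (nj j)) (Fin n) ℝ)
    (c : Fin m → ℝ)
    (hc_pos : ∀ j : Fin m, (j : ℕ) < mp → 0 < c j)
    (hc_neg : ∀ j : Fin m, mp ≤ (j : ℕ) → c j < 0)
    (hBp : Function.Surjective
      (fun (x : Fin n → ℝ) (j : Fin mp) => (B (Fin.castLE hmp j)).mulVec x))
    (A : ∀ j : Fin m, Matrix (Fin (nj j)) (Fin (nj j)) ℝ)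
    (hA : ∀ j, (A j).PosDef)
    (M : Matrix (Fin n) (Fin n) ℝ)
    (hM : M = ∑ j, c j • ((B j)ᵀ * A j * B j))
    (hMpd : M.PosDef)
    (v : ∀ j : Fin m, Fin (nj j) → ℝ)
    (xstar : Fin n → ℝ)
    (hxstar : ∀ j : Fin m, (j : ℕ) < mp → (B j).mulVec xstar = (A j)⁻¹.mulVec (v j))
    (w : Fin n → ℝ) (hw : w = ∑ j, c j • ((B j)ᵀ.mulVec (v j)))
    (w' : Fin n → ℝ) (hw' : w' = xstar - M⁻¹.mulVec w)
    (v' : ∀ j : Fin m, Fin (nj j) → ℝ)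
    (hv' : ∀ j : Fin m, mp ≤ (j : ℕ) → v' j = (B j).mulVec xstar - (A j)⁻¹.mulVec (v j)) :
    w ⬝ᵥ (M⁻¹.mulVec w) - ∑ j, c j * (v j ⬝ᵥ ((A j)⁻¹.mulVec (v j)))
      = w' ⬝ᵥ (M.mulVec w')
        + ∑ j ∈ Finset.univ.filter (fun j : Fin m => mp ≤ (j : ℕ)),
            |c j| * (v' j ⬝ᵥ ((A j).mulVec (v' j))) := by
  -- abbreviations
  set p : Fin m → ℝ := fun j => ((B j).mulVec xstar) ⬝ᵥ ((A j).mulVec ((B j).mulVec xstar))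
    with hp
  set q : Fin m → ℝ := fun j => ((B j).mulVec xstar) ⬝ᵥ v j with hq
  set r : Fin m → ℝ := fun j => v j ⬝ᵥ ((A j)⁻¹.mulVec (v j)) with hr
  set y : Fin n → ℝ := M⁻¹.mulVec w with hy
  -- basic symmetry / invertibility facts
  have hMsym : Mᵀ = M := by
    rw [← Matrix.conjTranspose_eq_transpose_of_trivial]; exact hMpd.isHermitian
  have hAsym : ∀ j, (A j)ᵀ = A j := fun j => by
    rw [← Matrix.conjTranspose_eq_transpose_of_trivial]; exact (hA j).isHermitian
  have hAinv : ∀ j, (A j).mulVec ((A j)⁻¹.mulVec (v j)) = v j := fun j => by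
    rw [Matrix.mulVec_mulVec, Matrix.mul_nonsing_inv _ (hA j).det_pos.ne'.isUnit,
      Matrix.one_mulVec]
  have hMy : M.mulVec y = w := by
    rw [hy, Matrix.mulVec_mulVec, Matrix.mul_nonsing_inv _ hMpd.det_pos.ne'.isUnit,
      Matrix.one_mulVec]
  -- quadratic form expansions
  have h1 : xstar ⬝ᵥ M.mulVec xstar = ∑ j, c j * p j := by
    rw [hM, summv, dotsum]
    refine Finset.sum_congr rfl fun j _ => ?_
    rw [Matrix.smul_mulVec, dotProduct_smul, ← Matrix.mulVec_mulVec,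
      ← Matrix.mulVec_mulVec, tdot]
    simp [hp]
  have h2 : xstar ⬝ᵥ w = ∑ j, c j * q j := by
    rw [hw, dotsum]
    refine Finset.sum_congr rfl fun j _ => ?_
    rw [dotProduct_smul, tdot]
    simp [hq]
  have h5 : w' ⬝ᵥ M.mulVec w'
      = (∑ j, c j * p j) - 2 * (∑ j, c j * q j) + w ⬝ᵥ y := by
    rw [hw', Matrix.mulVec_sub, sub_dotProduct, dotProduct_sub, dotProduct_sub,
      hMy, sdot M hMsym y xstar, hMy, dotProduct_comm w xstar, dotProduct_comm y w,
      ← h1, ← h2]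
    ring
  -- terms with j ≥ mp
  have h4 : ∀ j : Fin m, mp ≤ (j : ℕ) →
      v' j ⬝ᵥ ((A j).mulVec (v' j)) = p j - 2 * q j + r j := by
    intro j hj
    rw [hv' j hj, Matrix.mulVec_sub, sub_dotProduct, dotProduct_sub, dotProduct_sub,
      hAinv j, sdot (A j) (hAsym j) ((A j)⁻¹.mulVec (v j)), hAinv j,
      dotProduct_comm (v j) ((B j).mulVec xstar),
      dotProduct_comm ((A j)⁻¹.mulVec (v j)) (v j)]
    simp only [hp, hq, hr]
    ring
  -- terms with j < mp
  have h3p : ∀ j : Fin m, (j : ℕ) < mp → p j = r j := by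
    intro j hj
    simp only [hp, hr, hxstar j hj]
    rw [sdot (A j) (hAsym j), hAinv j, dotProduct_comm]
  have h3q : ∀ j : Fin m, (j : ℕ) < mp → q j = r j := by
    intro j hj
    simp only [hq, hr, hxstar j hj, dotProduct_comm]
  -- split sums
  have hsplit : ∀ f : Fin m → ℝ, ∑ j, f j
      = (∑ j ∈ Finset.univ.filter (fun j : Fin m => mp ≤ (j : ℕ)), f j)
        + ∑ j ∈ Finset.univ.filter (fun j : Fin m => ¬ mp ≤ (j : ℕ)), f j :=
    fun f => (Finset.sum_filter_add_sum_filter_not _ _ f).symm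
  have hRHSsum : ∑ j ∈ Finset.univ.filter (fun j : Fin m => mp ≤ (j : ℕ)),
        |c j| * (v' j ⬝ᵥ ((A j).mulVec (v' j)))
      = -(∑ j ∈ Finset.univ.filter (fun j : Fin m => mp ≤ (j : ℕ)), c j * p j)
        + 2 * (∑ j ∈ Finset.univ.filter (fun j : Fin m => mp ≤ (j : ℕ)), c j * q j)
        - ∑ j ∈ Finset.univ.filter (fun j : Fin m => mp ≤ (j : ℕ)), c j * r j := by
    rw [← Finset.sum_neg_distrib, Finset.mul_sum, ← Finset.sum_add_distrib,
      ← Finset.sum_sub_distrib]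
    refine Finset.sum_congr rfl fun j hj => ?_
    have hj' : mp ≤ (j : ℕ) := (Finset.mem_filter.mp hj).2
    rw [abs_of_neg (hc_neg j hj'), h4 j hj']
    ring
  have hnotp : ∑ j ∈ Finset.univ.filter (fun j : Fin m => ¬ mp ≤ (j : ℕ)), c j * p j
      = ∑ j ∈ Finset.univ.filter (fun j : Fin m => ¬ mp ≤ (j : ℕ)), c j * r j :=
    Finset.sum_congr rfl fun j hj =>
      by rw [h3p j (Nat.lt_of_not_le (Finset.mem_filter.mp hj).2)]
  have hnotq : ∑ j ∈ Finset.univ.filter (fun j : Fin m => ¬ mp ≤ (j : ℕ)), c j * q j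
      = ∑ j ∈ Finset.univ.filter (fun j : Fin m => ¬ mp ≤ (j : ℕ)), c j * r j :=
    Finset.sum_congr rfl fun j hj =>
      by rw [h3q j (Nat.lt_of_not_le (Finset.mem_filter.mp hj).2)]
  calc w ⬝ᵥ y - ∑ j, c j * r j
      = w ⬝ᵥ y
        - ((∑ j ∈ Finset.univ.filter (fun j : Fin m => mp ≤ (j : ℕ)), c j * r j)
          + ∑ j ∈ Finset.univ.filter (fun j : Fin m => ¬ mp ≤ (j : ℕ)), c j * r j) := by
        rw [← hsplit]
    _ = w' ⬝ᵥ M.mulVec w'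
        + ∑ j ∈ Finset.univ.filter (fun j : Fin m => mp ≤ (j : ℕ)),
            |c j| * (v' j ⬝ᵥ ((A j).mulVec (v' j))) := by
        rw [h5, hRHSsum, hsplit (fun j => c j * p j), hsplit (fun j => c j * q j),
          hnotp, hnotq]
        ring
end

section
/- Log-convexity (Li--Yau type) estimate: if $G$ is positive definite self-adjoint on $\mathbb{R}^n$, $\mu$ is a positive finite nonzero Borel measure, and $u=g_G*\mu$, then $u$ is smooth, strictly positive, and its log-Hessian satisfies $D^2(\log u)(x)\ge -2\pi G$ for every $x\in\mathbb{R}^n$ (as self-adjoint transformations). -/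
open Matrix MeasureTheory
open Nat

namespace Stmt6Aux

variable {n : ℕ}

lemma abs_dot_le (x z : Fin n → ℝ) : |x ⬝ᵥ z| ≤ (n * ‖x‖) * ‖z‖ := by
  calc |x ⬝ᵥ z| ≤ ∑ i, |x i * z i| := Finset.abs_sum_le_sum_abs _ _
    _ ≤ ∑ _i : Fin n, ‖x‖ * ‖z‖ := by
        refine Finset.sum_le_sum fun i _ => ?_
        rw [abs_mul]
        exact mul_le_mul (norm_le_pi_norm x i) (norm_le_pi_norm z i) (abs_nonneg _) (norm_nonneg _)
    _ = (n * ‖x‖) * ‖z‖ := by simp [Finset.sum_const]; ring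

noncomputable def dualCLM (z : Fin n → ℝ) : (Fin n → ℝ) →L[ℝ] ℝ :=
  ∑ i, z i • ContinuousLinearMap.proj i

@[simp] lemma dualCLM_apply (z h : Fin n → ℝ) : dualCLM z h = z ⬝ᵥ h := by
  simp [dualCLM, dotProduct, ContinuousLinearMap.sum_apply]

lemma continuous_dualCLM : Continuous (dualCLM (n := n)) := by
  refine continuous_finset_sum _ fun i _ => ?_
  exact (continuous_apply i).smul continuous_const

lemma continuous_dot (ξ : Fin n → ℝ) : Continuous fun z : Fin n → ℝ => ξ ⬝ᵥ z := by
  have h : (fun z : Fin n → ℝ => ξ ⬝ᵥ z) = ⇑(dualCLM ξ) := by ext z; simp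
  rw [h]; exact (dualCLM ξ).continuous

lemma continuous_dot' (η : Fin n → ℝ) : Continuous fun z : Fin n → ℝ => z ⬝ᵥ η := by
  simp only [dotProduct]
  exact continuous_finset_sum _ fun i _ => (continuous_apply i).mul continuous_const

lemma norm_dualCLM_le (z : Fin n → ℝ) : ‖dualCLM z‖ ≤ n * ‖z‖ := by
  refine ContinuousLinearMap.opNorm_le_bound _ (by positivity) fun h => ?_
  rw [dualCLM_apply]
  simpa [Real.norm_eq_abs, mul_assoc] using abs_dot_le z h


lemma pow_div_factorial_le_exp (x : ℝ) (hx : 0 ≤ x) (k : ℕ) :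
    x ^ k / (k ! : ℝ) ≤ Real.exp x := by
  calc x ^ k / (k ! : ℝ) ≤ ∑ i ∈ Finset.range (k + 1), x ^ i / (i ! : ℝ) := by
        refine Finset.single_le_sum (f := fun i => x ^ i / (i ! : ℝ)) ?_ ?_
        · intro i _; positivity
        · exact Finset.self_mem_range_succ k
    _ ≤ Real.exp x := Real.sum_le_exp_of_nonneg hx _


section Laplace

variable {μ : Measure (Fin n → ℝ)} [IsFiniteMeasure μ] {g : (Fin n → ℝ) → ℝ}
  (hgc : Continuous g)
  (hgi : ∀ (ξ : Fin n → ℝ) (c : ℝ),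
    Integrable (fun z => Real.exp (ξ ⬝ᵥ z + c * ‖z‖) * |g z|) μ)

include hgc hgi in
lemma int_aux (ξ : Fin n → ℝ) (c : ℝ) {h : (Fin n → ℝ) → ℝ} (hc : Continuous h)
    (hb : ∀ z, |h z| ≤ Real.exp (c * ‖z‖) * |g z|) :
    Integrable (fun z => Real.exp (ξ ⬝ᵥ z) * h z) μ := by
  refine (hgi ξ c).mono' ?_ ?_
  · exact (((continuous_dot ξ).rexp).mul hc).aestronglyMeasurable
  · refine Filter.Eventually.of_forall fun z => ?_
    rw [Real.norm_eq_abs, abs_mul, abs_of_pos (Real.exp_pos _), Real.exp_add, mul_assoc]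
    exact mul_le_mul_of_nonneg_left (hb z) (Real.exp_pos _).le

include hgc hgi in
lemma intF (ξ : Fin n → ℝ) : Integrable (fun z => Real.exp (ξ ⬝ᵥ z) * g z) μ := by
  refine int_aux hgc hgi ξ 0 hgc fun z => ?_
  simp

include hgc hgi in
lemma int_dot (ξ η : Fin n → ℝ) :
    Integrable (fun z => Real.exp (ξ ⬝ᵥ z) * ((η ⬝ᵥ z) * g z)) μ := by
  refine int_aux hgc hgi ξ (n * ‖η‖) ((continuous_dot η).mul hgc) fun z => ?_
  rw [abs_mul]
  have h1 : |η ⬝ᵥ z| ≤ (n * ‖η‖) * ‖z‖ := abs_dot_le η z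
  have h2 : (n * ‖η‖) * ‖z‖ ≤ Real.exp ((n * ‖η‖) * ‖z‖) := by
    have := Real.add_one_le_exp ((n * ‖η‖) * ‖z‖); linarith
  exact mul_le_mul_of_nonneg_right (h1.trans h2) (abs_nonneg _)

include hgc hgi in
lemma int_dot2 (ξ η : Fin n → ℝ) :
    Integrable (fun z => Real.exp (ξ ⬝ᵥ z) * ((η ⬝ᵥ z) * ((η ⬝ᵥ z) * g z))) μ := by
  have hb : ∀ z : Fin n → ℝ, |(η ⬝ᵥ z) * ((η ⬝ᵥ z) * g z)|
      ≤ Real.exp ((2 * ((n:ℝ) * ‖η‖)) * ‖z‖) * |g z| := by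
    intro z
    rw [abs_mul, abs_mul, ← mul_assoc]
    refine mul_le_mul_of_nonneg_right ?_ (abs_nonneg _)
    have h1 : |η ⬝ᵥ z| ≤ ((n:ℝ) * ‖η‖) * ‖z‖ := abs_dot_le η z
    have h2 : ((n:ℝ) * ‖η‖) * ‖z‖ ≤ Real.exp (((n:ℝ) * ‖η‖) * ‖z‖) := by
      have := Real.add_one_le_exp (((n:ℝ) * ‖η‖) * ‖z‖); linarith
    calc |η ⬝ᵥ z| * |η ⬝ᵥ z| ≤ Real.exp (((n:ℝ) * ‖η‖) * ‖z‖) * Real.exp (((n:ℝ) * ‖η‖) * ‖z‖) :=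
          mul_le_mul (h1.trans h2) (h1.trans h2) (abs_nonneg _) (Real.exp_pos _).le
      _ = Real.exp ((2 * ((n:ℝ) * ‖η‖)) * ‖z‖) := by rw [← Real.exp_add]; ring_nf
  exact int_aux hgc hgi ξ _ ((continuous_dot η).mul ((continuous_dot η).mul hgc)) hb

include hgc hgi in
lemma hgi_mul_dot (η : Fin n → ℝ) (ξ : Fin n → ℝ) (c : ℝ) :
    Integrable (fun z => Real.exp (ξ ⬝ᵥ z + c * ‖z‖) * |(η ⬝ᵥ z) * g z|) μ := by
  refine ((hgi ξ (c + 1)).const_mul ((n:ℝ) * ‖η‖)).mono' ?_ ?_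
  · exact ((continuous_dot ξ).add (continuous_const.mul continuous_norm)).rexp.mul
      (((continuous_dot η).mul hgc).abs) |>.aestronglyMeasurable
  · refine Filter.Eventually.of_forall fun z => ?_
    rw [Real.norm_eq_abs, abs_mul, abs_abs, abs_of_pos (Real.exp_pos _), abs_mul]
    have h1 : |η ⬝ᵥ z| ≤ ((n:ℝ) * ‖η‖) * Real.exp ‖z‖ := by
      refine (abs_dot_le η z).trans ?_
      refine mul_le_mul_of_nonneg_left ?_ (by positivity)
      have := Real.add_one_le_exp ‖z‖; linarith
    calc Real.exp (ξ ⬝ᵥ z + c * ‖z‖) * (|η ⬝ᵥ z| * |g z|)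
        ≤ Real.exp (ξ ⬝ᵥ z + c * ‖z‖) * ((((n:ℝ) * ‖η‖) * Real.exp ‖z‖) * |g z|) := by
          refine mul_le_mul_of_nonneg_left
            (mul_le_mul_of_nonneg_right h1 (abs_nonneg _)) (Real.exp_pos _).le
      _ = (n:ℝ) * ‖η‖ * (Real.exp (ξ ⬝ᵥ z + (c + 1) * ‖z‖) * |g z|) := by
          rw [Real.exp_add, Real.exp_add,
            show (c + 1) * ‖z‖ = c * ‖z‖ + ‖z‖ by ring, Real.exp_add]
          ring

include hgc hgi in
lemma Fpos (hμ : μ ≠ 0) (hgpos : ∀ z, 0 < g z) (ξ : Fin n → ℝ) :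
    0 < ∫ z, Real.exp (ξ ⬝ᵥ z) * g z ∂μ := by
  rw [integral_pos_iff_support_of_nonneg_ae
    (Filter.Eventually.of_forall fun z => (mul_pos (Real.exp_pos _) (hgpos z)).le)
    (intF hgc hgi ξ)]
  have hsupp : Function.support (fun z => Real.exp (ξ ⬝ᵥ z) * g z) = Set.univ := by
    ext z
    simp only [Function.mem_support, Set.mem_univ, iff_true]
    exact (mul_pos (Real.exp_pos _) (hgpos z)).ne'
  rw [hsupp]
  exact Measure.measure_univ_pos.mpr hμ

include hgc hgi in
lemma hasDerivAt_M (ξ₀ η : Fin n → ℝ) (t : ℝ) :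
    HasDerivAt (fun s => ∫ z, Real.exp ((ξ₀ + s • η) ⬝ᵥ z) * g z ∂μ)
      (∫ z, Real.exp ((ξ₀ + t • η) ⬝ᵥ z) * ((η ⬝ᵥ z) * g z) ∂μ) t := by
  have key := hasDerivAt_integral_of_dominated_loc_of_deriv_le (μ := μ)
    (F := fun s z => Real.exp ((ξ₀ + s • η) ⬝ᵥ z) * g z)
    (F' := fun s z => Real.exp ((ξ₀ + s • η) ⬝ᵥ z) * ((η ⬝ᵥ z) * g z))
    (x₀ := t)
    (bound := fun z => (n * ‖η‖) *
      (Real.exp ((ξ₀ + t • η) ⬝ᵥ z + (n * ‖η‖ + 1) * ‖z‖) * |g z|))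
    (s := Metric.ball t 1) (Metric.ball_mem_nhds t one_pos)
    (Filter.Eventually.of_forall fun s =>
      (((continuous_dot _).rexp).mul hgc).aestronglyMeasurable)
    (intF hgc hgi _)
    ((((continuous_dot _).rexp).mul ((continuous_dot η).mul hgc)).aestronglyMeasurable)
    ?_ ((hgi _ _).const_mul _) ?_
  · exact key.2
  · refine Filter.Eventually.of_forall fun z => fun s hs => ?_
    have hst : |s - t| ≤ 1 := by
      rw [Metric.mem_ball, Real.dist_eq] at hs; linarith [hs.le]
    have hdot : |η ⬝ᵥ z| ≤ (n * ‖η‖) * ‖z‖ := abs_dot_le η z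
    have hexp : (ξ₀ + s • η) ⬝ᵥ z ≤ (ξ₀ + t • η) ⬝ᵥ z + (n * ‖η‖) * ‖z‖ := by
      have : (ξ₀ + s • η) ⬝ᵥ z - (ξ₀ + t • η) ⬝ᵥ z = (s - t) * (η ⬝ᵥ z) := by
        simp [add_dotProduct, smul_dotProduct, smul_eq_mul]; ring
      have h4 : (s - t) * (η ⬝ᵥ z) ≤ (n * ‖η‖) * ‖z‖ := by
        calc (s - t) * (η ⬝ᵥ z) ≤ |(s - t) * (η ⬝ᵥ z)| := le_abs_self _
          _ = |s - t| * |η ⬝ᵥ z| := abs_mul _ _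
          _ ≤ 1 * ((n * ‖η‖) * ‖z‖) := by
              refine mul_le_mul hst hdot (abs_nonneg _) zero_le_one
          _ = (n * ‖η‖) * ‖z‖ := one_mul _
      linarith
    have hznorm : ‖z‖ ≤ Real.exp ‖z‖ := by have := Real.add_one_le_exp ‖z‖; linarith
    rw [Real.norm_eq_abs, abs_mul, abs_of_pos (Real.exp_pos _), abs_mul]
    calc Real.exp ((ξ₀ + s • η) ⬝ᵥ z) * (|η ⬝ᵥ z| * |g z|)
        ≤ Real.exp ((ξ₀ + t • η) ⬝ᵥ z + (n * ‖η‖) * ‖z‖) *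
            (((n * ‖η‖) * Real.exp ‖z‖) * |g z|) := by
          refine mul_le_mul (Real.exp_le_exp.mpr hexp) ?_ (by positivity) (Real.exp_pos _).le
          refine mul_le_mul_of_nonneg_right ?_ (abs_nonneg _)
          calc |η ⬝ᵥ z| ≤ (n * ‖η‖) * ‖z‖ := hdot
            _ ≤ (n * ‖η‖) * Real.exp ‖z‖ := by
                refine mul_le_mul_of_nonneg_left hznorm (by positivity)
      _ = (n * ‖η‖) * (Real.exp ((ξ₀ + t • η) ⬝ᵥ z + (n * ‖η‖ + 1) * ‖z‖) * |g z|) := by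
          rw [Real.exp_add, Real.exp_add]
          ring_nf
          rw [Real.exp_add]
          ring
  · refine Filter.Eventually.of_forall fun z s _ => ?_
    have h1 : ∀ s : ℝ, (ξ₀ + s • η) ⬝ᵥ z = ξ₀ ⬝ᵥ z + s * (η ⬝ᵥ z) := by
      intro s; simp [add_dotProduct, smul_dotProduct]
    simp only [h1]
    have : HasDerivAt (fun s : ℝ => ξ₀ ⬝ᵥ z + s * (η ⬝ᵥ z)) (η ⬝ᵥ z) s := by
      simpa using (hasDerivAt_mul_const (η ⬝ᵥ z) (x := s)).const_add (ξ₀ ⬝ᵥ z)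
    have h2 := (this.exp).mul_const (g z)
    convert h2 using 1
    · rfl
    ring

include hgc hgi in
lemma int_J (ξ : Fin n → ℝ) (r : ℝ) (hr : 0 ≤ r) (k : ℕ) :
    Integrable (fun z => Real.exp (ξ ⬝ᵥ z) * ((r * ‖z‖) ^ k / (k ! : ℝ) * |g z|)) μ := by
  refine int_aux hgc hgi ξ r ?_ fun z => ?_
  · exact (((continuous_const.mul continuous_norm).pow k).div_const _).mul hgc.abs
  · rw [abs_mul, abs_abs, abs_div, abs_pow,
      abs_of_nonneg (by positivity : (0:ℝ) ≤ r * ‖z‖),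
      abs_of_nonneg (by positivity : (0:ℝ) ≤ (k ! : ℝ))]
    exact mul_le_mul_of_nonneg_right
      (pow_div_factorial_le_exp _ (by positivity) k) (abs_nonneg _)

include hgc hgi in
lemma summable_J (ξ : Fin n → ℝ) (r : ℝ) (hr : 0 ≤ r) :
    Summable (fun k : ℕ =>
      ∫ z, Real.exp (ξ ⬝ᵥ z) * ((r * ‖z‖) ^ k / (k ! : ℝ) * |g z|) ∂μ) := by
  refine summable_of_sum_range_le (c := ∫ z, Real.exp (ξ ⬝ᵥ z + r * ‖z‖) * |g z| ∂μ)
    (fun k => integral_nonneg fun z => by positivity) fun K => ?_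
  rw [← integral_finset_sum _ (fun k _ => int_J hgc hgi ξ r hr k)]
  refine integral_mono
    (integrable_finset_sum _ (fun k _ => int_J hgc hgi ξ r hr k)) (hgi ξ r) fun z => ?_
  simp only
  rw [← Finset.mul_sum, ← Finset.sum_mul, Real.exp_add, mul_assoc]
  refine mul_le_mul_of_nonneg_left
    (mul_le_mul_of_nonneg_right (Real.sum_le_exp_of_nonneg (by positivity) K) (abs_nonneg _))
    (Real.exp_pos _).le

set_option synthInstance.maxHeartbeats 1000000 in
include hgc hgi in
lemma analyticAtF (ξ₀ : Fin n → ℝ) :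
    AnalyticAt ℝ (fun ξ : Fin n → ℝ => ∫ z, Real.exp (ξ ⬝ᵥ z) * g z ∂μ) ξ₀ := by
  classical
  set mk : ∀ k : ℕ, (Fin n → ℝ) → ContinuousMultilinearMap ℝ (fun _ : Fin k => (Fin n → ℝ)) ℝ :=
    fun k z => (ContinuousMultilinearMap.mkPiAlgebraFin ℝ k ℝ).compContinuousLinearMap
      (fun _ => dualCLM z) with hmkdef
  have hmk_apply : ∀ (k : ℕ) (z h : Fin n → ℝ), mk k z (fun _ => h) = (z ⬝ᵥ h) ^ k := by
    intro k z h
    simp [hmkdef, ContinuousMultilinearMap.compContinuousLinearMap_apply,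
      ContinuousMultilinearMap.mkPiAlgebraFin_apply, List.prod_ofFn, Finset.prod_const,
      Finset.card_fin]
  have hmk_norm : ∀ (k : ℕ) (z : Fin n → ℝ), ‖mk k z‖ ≤ ((n : ℝ) * ‖z‖) ^ k := by
    intro k z
    calc ‖mk k z‖
        ≤ ‖ContinuousMultilinearMap.mkPiAlgebraFin ℝ k ℝ‖ * ∏ _i : Fin k, ‖dualCLM z‖ :=
          ContinuousMultilinearMap.norm_compContinuousLinearMap_le _ _
      _ ≤ 1 * ∏ _i : Fin k, ((n : ℝ) * ‖z‖) := by
          refine mul_le_mul ?_ ?_ (Finset.prod_nonneg fun _ _ => norm_nonneg _) zero_le_one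
          · simpa using ContinuousMultilinearMap.norm_mkPiAlgebraFin_le (𝕜 := ℝ) (n := k) (A := ℝ)
          · exact Finset.prod_le_prod (fun _ _ => norm_nonneg _) (fun i _ => norm_dualCLM_le z)
      _ = ((n : ℝ) * ‖z‖) ^ k := by simp [Finset.prod_const]
  have hmk_cont : ∀ k : ℕ, Continuous (mk k) := by
    intro k
    have h1 : Continuous fun z : Fin n → ℝ => (fun _ : Fin k => dualCLM z) :=
      continuous_pi fun _ => continuous_dualCLM
    exact (ContinuousMultilinearMap.compContinuousLinearMapLRight
      (ContinuousMultilinearMap.mkPiAlgebraFin ℝ k ℝ)).cont.comp h1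
  set ck : ∀ k : ℕ, (Fin n → ℝ) → ContinuousMultilinearMap ℝ (fun _ : Fin k => (Fin n → ℝ)) ℝ :=
    fun k z => (Real.exp (ξ₀ ⬝ᵥ z) * g z * ((k ! : ℝ))⁻¹) • mk k z with hckdef
  have hck_norm : ∀ (k : ℕ) (z : Fin n → ℝ),
      ‖ck k z‖ ≤ Real.exp (ξ₀ ⬝ᵥ z) * (((n : ℝ) * ‖z‖) ^ k / (k ! : ℝ) * |g z|) := by
    intro k z
    rw [hckdef]
    simp only
    refine (norm_smul_le (Real.exp (ξ₀ ⬝ᵥ z) * g z * ((k ! : ℝ))⁻¹) (mk k z)).trans ?_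
    rw [Real.norm_eq_abs, abs_mul, abs_mul, abs_of_pos (Real.exp_pos _),
      abs_of_nonneg (by positivity : (0:ℝ) ≤ ((k ! : ℝ))⁻¹)]
    calc Real.exp (ξ₀ ⬝ᵥ z) * |g z| * (k ! : ℝ)⁻¹ * ‖mk k z‖
        ≤ Real.exp (ξ₀ ⬝ᵥ z) * |g z| * (k ! : ℝ)⁻¹ * ((n : ℝ) * ‖z‖) ^ k :=
          mul_le_mul_of_nonneg_left (hmk_norm k z) (by positivity)
      _ = Real.exp (ξ₀ ⬝ᵥ z) * (((n : ℝ) * ‖z‖) ^ k / (k ! : ℝ) * |g z|) := by ring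
  have hck_int : ∀ k : ℕ, Integrable (ck k) μ := by
    intro k
    refine Integrable.mono' (int_J hgc hgi ξ₀ n (by positivity) k) ?_
      (Filter.Eventually.of_forall fun z => hck_norm k z)
    have hcont : Continuous (ck k) := by
      rw [hckdef]
      exact (((continuous_dot ξ₀).rexp.mul hgc).mul continuous_const).smul (hmk_cont k)
    exact hcont.stronglyMeasurable.aestronglyMeasurable
  set p : FormalMultilinearSeries ℝ (Fin n → ℝ) ℝ := fun k => ∫ z, ck k z ∂μ with hpdef
  have hp_norm : ∀ k : ℕ,
      ‖p k‖ ≤ ∫ z, Real.exp (ξ₀ ⬝ᵥ z) * (((n:ℝ) * ‖z‖) ^ k / (k ! : ℝ) * |g z|) ∂μ := by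
    intro k
    refine (norm_integral_le_integral_norm _).trans ?_
    exact integral_mono (hck_int k).norm (int_J hgc hgi ξ₀ n (by positivity) k)
      fun z => hck_norm k z
  have hradius : (1 : ENNReal) ≤ p.radius := by
    refine FormalMultilinearSeries.le_radius_of_summable (r := 1) p ?_
    simp only [NNReal.coe_one, one_pow, mul_one]
    exact Summable.of_nonneg_of_le (fun k => norm_nonneg _) hp_norm
      (summable_J hgc hgi ξ₀ n (by positivity))
  have hsum : ∀ h : Fin n → ℝ, HasSum (fun k : ℕ => p k fun _ => h)
      (∫ z, Real.exp ((ξ₀ + h) ⬝ᵥ z) * g z ∂μ) := by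
    intro h
    set Fk : ℕ → (Fin n → ℝ) → ℝ :=
      fun k z => (Real.exp (ξ₀ ⬝ᵥ z) * g z * ((k ! : ℝ))⁻¹) * (z ⬝ᵥ h) ^ k with hFkdef
    have hFk_bound : ∀ (k : ℕ) (z : Fin n → ℝ),
        ‖Fk k z‖ ≤ Real.exp (ξ₀ ⬝ᵥ z) * ((((n : ℝ) * ‖h‖) * ‖z‖) ^ k / (k ! : ℝ) * |g z|) := by
      intro k z
      rw [hFkdef]
      simp only
      rw [Real.norm_eq_abs, abs_mul, abs_mul, abs_mul, abs_pow,
        abs_of_pos (Real.exp_pos _),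
        abs_of_nonneg (by positivity : (0:ℝ) ≤ ((k ! : ℝ))⁻¹)]
      have hd : |z ⬝ᵥ h| ≤ ((n : ℝ) * ‖h‖) * ‖z‖ := by
        calc |z ⬝ᵥ h| ≤ ((n : ℝ) * ‖z‖) * ‖h‖ := abs_dot_le z h
          _ = ((n : ℝ) * ‖h‖) * ‖z‖ := by ring
      calc Real.exp (ξ₀ ⬝ᵥ z) * |g z| * (k ! : ℝ)⁻¹ * |z ⬝ᵥ h| ^ k
          ≤ Real.exp (ξ₀ ⬝ᵥ z) * |g z| * (k ! : ℝ)⁻¹ * (((n : ℝ) * ‖h‖) * ‖z‖) ^ k := by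
            refine mul_le_mul_of_nonneg_left ?_ (by positivity)
            exact pow_le_pow_left₀ (abs_nonneg _) hd k
        _ = Real.exp (ξ₀ ⬝ᵥ z) * ((((n : ℝ) * ‖h‖) * ‖z‖) ^ k / (k ! : ℝ) * |g z|) := by ring
    have hFk_int : ∀ k : ℕ, Integrable (Fk k) μ := by
      intro k
      refine Integrable.mono' (int_J hgc hgi ξ₀ ((n : ℝ) * ‖h‖) (by positivity) k) ?_
        (Filter.Eventually.of_forall fun z => hFk_bound k z)
      have hcont : Continuous (Fk k) := by
        rw [hFkdef]
        exact (((continuous_dot ξ₀).rexp.mul hgc).mul continuous_const).mul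
          ((continuous_dot' h).pow k)
      exact hcont.aestronglyMeasurable
    have hFk_sum : Summable fun k : ℕ => ∫ z, ‖Fk k z‖ ∂μ := by
      refine Summable.of_nonneg_of_le (fun k => integral_nonneg fun z => norm_nonneg _)
        (fun k => integral_mono (hFk_int k).norm
          (int_J hgc hgi ξ₀ ((n : ℝ) * ‖h‖) (by positivity) k) fun z => hFk_bound k z)
        (summable_J hgc hgi ξ₀ ((n : ℝ) * ‖h‖) (by positivity))
    have H := hasSum_integral_of_summable_integral_norm hFk_int hFk_sum
    have h1 : (fun k : ℕ => p k fun _ => h) = fun k : ℕ => ∫ z, Fk k z ∂μ := by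
      funext k
      have e1 : p k = ∫ z, ck k z ∂μ := rfl
      rw [e1, ContinuousMultilinearMap.integral_apply (hck_int k)]
      have e2 : (fun z => (ck k z) fun _ => h) = Fk k := by
        funext z
        rw [hckdef, hFkdef]
        simp only [ContinuousMultilinearMap.smul_apply, hmk_apply, smul_eq_mul]
      rw [e2]
    have h2 : (∫ z, ∑' k : ℕ, Fk k z ∂μ) = ∫ z, Real.exp ((ξ₀ + h) ⬝ᵥ z) * g z ∂μ := by
      refine integral_congr_ae (Filter.Eventually.of_forall fun z => ?_)
      have e3 : ∀ k : ℕ, Fk k z = (Real.exp (ξ₀ ⬝ᵥ z) * g z) * ((z ⬝ᵥ h) ^ k / (k ! : ℝ)) := by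
        intro k; rw [hFkdef]; ring
      calc (∑' k : ℕ, Fk k z)
          = ∑' k : ℕ, (Real.exp (ξ₀ ⬝ᵥ z) * g z) * ((z ⬝ᵥ h) ^ k / (k ! : ℝ)) :=
            tsum_congr e3
        _ = (Real.exp (ξ₀ ⬝ᵥ z) * g z) * ∑' k : ℕ, ((z ⬝ᵥ h) ^ k / (k ! : ℝ)) := tsum_mul_left
        _ = (Real.exp (ξ₀ ⬝ᵥ z) * g z) * Real.exp (z ⬝ᵥ h) := by
            rw [Real.exp_eq_exp_ℝ, NormedSpace.exp_eq_tsum_div]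
        _ = Real.exp ((ξ₀ + h) ⬝ᵥ z) * g z := by
            rw [add_dotProduct, Real.exp_add, dotProduct_comm h z]
            ring
    rw [h1, ← h2]
    exact H
  have hball : HasFPowerSeriesOnBall (fun ξ : Fin n → ℝ => ∫ z, Real.exp (ξ ⬝ᵥ z) * g z ∂μ)
      p ξ₀ 1 :=
    { r_le := hradius
      r_pos := zero_lt_one
      hasSum := fun {y} _ => hsum y }
  exact hball.analyticAt

include hgc hgi in
lemma cauchy_schwarz (hμ : μ ≠ 0) (hgpos : ∀ z, 0 < g z) (ξ η : Fin n → ℝ) :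
    (∫ z, Real.exp (ξ ⬝ᵥ z) * ((η ⬝ᵥ z) * g z) ∂μ) *
      (∫ z, Real.exp (ξ ⬝ᵥ z) * ((η ⬝ᵥ z) * g z) ∂μ)
    ≤ (∫ z, Real.exp (ξ ⬝ᵥ z) * ((η ⬝ᵥ z) * ((η ⬝ᵥ z) * g z)) ∂μ) *
      (∫ z, Real.exp (ξ ⬝ᵥ z) * g z ∂μ) := by
  set I0 : ℝ := ∫ z, Real.exp (ξ ⬝ᵥ z) * g z ∂μ with hI0def
  set I1 : ℝ := ∫ z, Real.exp (ξ ⬝ᵥ z) * ((η ⬝ᵥ z) * g z) ∂μ with hI1def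
  set I2 : ℝ := ∫ z, Real.exp (ξ ⬝ᵥ z) * ((η ⬝ᵥ z) * ((η ⬝ᵥ z) * g z)) ∂μ with hI2def
  have hI0pos : 0 < I0 := by rw [hI0def]; exact Fpos hgc hgi hμ hgpos ξ
  have key : 0 ≤ ∫ z, Real.exp (ξ ⬝ᵥ z) * (g z * ((η ⬝ᵥ z) - I1 / I0) ^ 2) ∂μ :=
    integral_nonneg fun z =>
      mul_nonneg (Real.exp_pos _).le (mul_nonneg (hgpos z).le (sq_nonneg _))
  have hexpand : (fun z => Real.exp (ξ ⬝ᵥ z) * (g z * ((η ⬝ᵥ z) - I1 / I0) ^ 2))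
      = fun z => (Real.exp (ξ ⬝ᵥ z) * ((η ⬝ᵥ z) * ((η ⬝ᵥ z) * g z))
          - (2 * (I1 / I0)) * (Real.exp (ξ ⬝ᵥ z) * ((η ⬝ᵥ z) * g z)))
          + ((I1 / I0) ^ 2) * (Real.exp (ξ ⬝ᵥ z) * g z) := by
    funext z; ring
  have hA : Integrable (fun z => Real.exp (ξ ⬝ᵥ z) * ((η ⬝ᵥ z) * ((η ⬝ᵥ z) * g z))) μ :=
    int_dot2 hgc hgi ξ η
  have hB : Integrable
      (fun z => (2 * (I1 / I0)) * (Real.exp (ξ ⬝ᵥ z) * ((η ⬝ᵥ z) * g z))) μ :=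
    (int_dot hgc hgi ξ η).const_mul _
  have hC : Integrable (fun z => ((I1 / I0) ^ 2) * (Real.exp (ξ ⬝ᵥ z) * g z)) μ :=
    (intF hgc hgi ξ).const_mul _
  have hAB : Integrable (fun z => Real.exp (ξ ⬝ᵥ z) * ((η ⬝ᵥ z) * ((η ⬝ᵥ z) * g z))
      - (2 * (I1 / I0)) * (Real.exp (ξ ⬝ᵥ z) * ((η ⬝ᵥ z) * g z))) μ := hA.sub hB
  rw [hexpand, integral_add hAB hC, integral_sub hA hB,
    integral_const_mul, integral_const_mul, ← hI0def, ← hI1def, ← hI2def] at key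
  have e1 : (I1 / I0) ^ 2 * I0 = I1 * I1 / I0 := by
    field_simp
  have e2 : 2 * (I1 / I0) * I1 = 2 * (I1 * I1 / I0) := by ring
  have key2 : I1 * I1 / I0 ≤ I2 := by linarith
  exact (div_le_iff₀ hI0pos).mp key2


end Laplace

lemma q_continuous (G : Matrix (Fin n) (Fin n) ℝ) :
    Continuous fun z : Fin n → ℝ => z ⬝ᵥ G *ᵥ z := by
  have : (fun z : Fin n → ℝ => z ⬝ᵥ G *ᵥ z)
      = fun z => ∑ i, z i * ∑ j, G i j * z j := by
    funext z; simp [dotProduct, Matrix.mulVec]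
  rw [this]
  exact continuous_finset_sum _ fun i _ => (continuous_apply i).mul
    (continuous_finset_sum _ fun j _ => continuous_const.mul (continuous_apply j))

lemma coercive (hG : G.PosDef) :
    ∃ lam : ℝ, 0 < lam ∧ ∀ z : Fin n → ℝ, lam * ‖z‖ ^ 2 ≤ z ⬝ᵥ G *ᵥ z := by
  have hqpos : ∀ z : Fin n → ℝ, z ≠ 0 → 0 < z ⬝ᵥ G *ᵥ z := by
    intro z hz
    have := hG.re_dotProduct_pos hz
    simpa using this
  rcases Nat.eq_zero_or_pos n with hn | hn
  · refine ⟨1, one_pos, fun z => ?_⟩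
    subst hn
    have hz : z = 0 := Subsingleton.elim _ _
    rw [hz, norm_zero, zero_dotProduct]
    norm_num
  · haveI : Nonempty (Fin n) := ⟨⟨0, hn⟩⟩
    have hcomp : IsCompact (Metric.sphere (0 : Fin n → ℝ) 1) := isCompact_sphere _ _
    have hne : (Metric.sphere (0 : Fin n → ℝ) 1).Nonempty :=
      NormedSpace.sphere_nonempty.mpr zero_le_one
    obtain ⟨w, hw, hmin⟩ := hcomp.exists_isMinOn hne ((q_continuous G).continuousOn)
    have hwn : ‖w‖ = 1 := by simpa using hw
    have hw0 : w ≠ 0 := by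
      intro h; rw [h, norm_zero] at hwn; exact one_ne_zero hwn.symm
    refine ⟨w ⬝ᵥ G *ᵥ w, hqpos w hw0, fun z => ?_⟩
    rcases eq_or_ne z 0 with rfl | hz
    · simp
    · have hzn : 0 < ‖z‖ := norm_pos_iff.mpr hz
      have hmem : ‖z‖⁻¹ • z ∈ Metric.sphere (0 : Fin n → ℝ) 1 := by
        simp [norm_smul, abs_of_pos (inv_pos.mpr hzn), inv_mul_cancel₀ hzn.ne']
      have hle := hmin hmem
      have hsc : (‖z‖⁻¹ • z) ⬝ᵥ G *ᵥ (‖z‖⁻¹ • z) = ‖z‖⁻¹ * (‖z‖⁻¹ * (z ⬝ᵥ G *ᵥ z)) := by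
        rw [Matrix.mulVec_smul, smul_dotProduct, dotProduct_smul]
        simp [smul_eq_mul]
      rw [Set.mem_setOf_eq] at hle
      have h2 : (w ⬝ᵥ G *ᵥ w) ≤ ‖z‖⁻¹ * (‖z‖⁻¹ * (z ⬝ᵥ G *ᵥ z)) := by
        calc (w ⬝ᵥ G *ᵥ w) ≤ (‖z‖⁻¹ • z) ⬝ᵥ G *ᵥ (‖z‖⁻¹ • z) := hle
          _ = _ := hsc
      have h3 : (w ⬝ᵥ G *ᵥ w) * ‖z‖ ^ 2 ≤ z ⬝ᵥ G *ᵥ z := by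
        have h4 := mul_le_mul_of_nonneg_left h2 (by positivity : (0:ℝ) ≤ ‖z‖ ^ 2)
        calc (w ⬝ᵥ G *ᵥ w) * ‖z‖ ^ 2 = ‖z‖ ^ 2 * (w ⬝ᵥ G *ᵥ w) := by ring
          _ ≤ ‖z‖ ^ 2 * (‖z‖⁻¹ * (‖z‖⁻¹ * (z ⬝ᵥ G *ᵥ z))) := h4
          _ = z ⬝ᵥ G *ᵥ z := by field_simp
      exact h3

end Stmt6Aux

open Stmt6Aux in
/-- Log-convexity (Li–Yau type) estimate for gaussian-regularized functions. -/
theorem stmt6 (n : ℕ) (G : Matrix (Fin n) (Fin n) ℝ) (hG : G.PosDef)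
    (μ : Measure (Fin n → ℝ)) [IsFiniteMeasure μ] (hμ : μ ≠ 0)
    (u : (Fin n → ℝ) → ℝ)
    (hu : ∀ x, u x = ∫ y, G.det ^ ((1:ℝ)/2) *
        Real.exp (-Real.pi * ((x - y) ⬝ᵥ (G.mulVec (x - y)))) ∂μ) :
    ContDiff ℝ (⊤ : ℕ∞) u ∧ (∀ x, 0 < u x) ∧
      ∀ x v : Fin n → ℝ,
        -2 * Real.pi * (v ⬝ᵥ (G.mulVec v)) ≤
          iteratedDeriv 2 (fun t : ℝ => Real.log (u (x + t • v))) 0 := by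
  -- abbreviations
  have hπ : (0:ℝ) < Real.pi := Real.pi_pos
  set g : (Fin n → ℝ) → ℝ := fun z => Real.exp (-Real.pi * (z ⬝ᵥ G *ᵥ z)) with hgdef
  have hgc : Continuous g := Real.continuous_exp.comp (continuous_const.mul (q_continuous G))
  -- integrability hypothesis
  have hgi : ∀ (ξ : Fin n → ℝ) (c : ℝ),
      Integrable (fun z => Real.exp (ξ ⬝ᵥ z + c * ‖z‖) * |g z|) μ := by
    intro ξ c
    obtain ⟨lam, hlam, hcoer⟩ := coercive hG
    set C : ℝ := ((n:ℝ) * ‖ξ‖ + |c|) ^ 2 / (4 * Real.pi * lam) with hCdef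
    refine (integrable_const (Real.exp C)).mono' ?_ ?_
    · exact (((continuous_dot ξ).add (continuous_const.mul continuous_norm)).rexp.mul
        hgc.abs).aestronglyMeasurable
    · refine Filter.Eventually.of_forall fun z => ?_
      rw [Real.norm_eq_abs, abs_mul, abs_abs, abs_of_pos (Real.exp_pos _), hgdef]
      simp only [abs_of_pos (Real.exp_pos _)]
      rw [← Real.exp_add, Real.exp_le_exp]
      have h1 : ξ ⬝ᵥ z ≤ ((n:ℝ) * ‖ξ‖) * ‖z‖ := (le_abs_self _).trans (abs_dot_le ξ z)
      have h2 : c * ‖z‖ ≤ |c| * ‖z‖ :=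
        mul_le_mul_of_nonneg_right (le_abs_self c) (norm_nonneg z)
      have h3 := hcoer z
      have key : (((n:ℝ) * ‖ξ‖ + |c|)) * ‖z‖ - Real.pi * (lam * ‖z‖ ^ 2) ≤ C := by
        rw [hCdef, le_div_iff₀ (by positivity)]
        nlinarith [sq_nonneg (2 * Real.pi * lam * ‖z‖ - ((n:ℝ) * ‖ξ‖ + |c|)), hπ, hlam,
          sq_nonneg ‖z‖]
      have h4 : Real.pi * (lam * ‖z‖ ^ 2) ≤ Real.pi * (z ⬝ᵥ G *ᵥ z) :=
        mul_le_mul_of_nonneg_left h3 hπ.le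
      linarith
  -- basic algebra of the quadratic form
  have hGT : Gᵀ = G := by
    have h2 : Gᴴ = Gᵀ := by
      ext i j
      simp [Matrix.conjTranspose_apply]
    rw [← h2]
    exact hG.1
  have hsymm : ∀ a b : Fin n → ℝ, a ⬝ᵥ G *ᵥ b = b ⬝ᵥ G *ᵥ a := by
    intro a b
    rw [dotProduct_mulVec, ← Matrix.mulVec_transpose, hGT, dotProduct_comm]
  have hqadd : ∀ a b : Fin n → ℝ,
      (a + b) ⬝ᵥ G *ᵥ (a + b) = a ⬝ᵥ G *ᵥ a + 2 * (a ⬝ᵥ G *ᵥ b) + b ⬝ᵥ G *ᵥ b := by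
    intro a b
    rw [Matrix.mulVec_add]
    simp only [add_dotProduct, dotProduct_add]
    rw [hsymm b a]
    ring
  have hqsub : ∀ a b : Fin n → ℝ,
      (a - b) ⬝ᵥ G *ᵥ (a - b) = a ⬝ᵥ G *ᵥ a - 2 * (a ⬝ᵥ G *ᵥ b) + b ⬝ᵥ G *ᵥ b := by
    intro a b
    rw [Matrix.mulVec_sub]
    simp only [sub_dotProduct, dotProduct_sub]
    rw [hsymm b a]
    ring
  set c₀ : ℝ := G.det ^ ((1:ℝ)/2) with hc₀def
  have hc₀ : 0 < c₀ := Real.rpow_pos_of_pos hG.det_pos _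
  have hgpos : ∀ z, 0 < g z := fun z => Real.exp_pos _
  -- representation of u
  have hurep : ∀ x : Fin n → ℝ, u x = (c₀ * Real.exp (-Real.pi * (x ⬝ᵥ G *ᵥ x))) *
      ∫ z, Real.exp (((2 * Real.pi) • (G *ᵥ x)) ⬝ᵥ z) * g z ∂μ := by
    intro x
    rw [hu x]
    have hpt : (fun y : Fin n → ℝ => c₀ * Real.exp (-Real.pi * ((x - y) ⬝ᵥ G *ᵥ (x - y))))
        = fun y => (c₀ * Real.exp (-Real.pi * (x ⬝ᵥ G *ᵥ x))) *
          (Real.exp (((2 * Real.pi) • (G *ᵥ x)) ⬝ᵥ y) * g y) := by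
      funext y
      have e1 : ((2 * Real.pi) • (G *ᵥ x)) ⬝ᵥ y = 2 * Real.pi * (x ⬝ᵥ G *ᵥ y) := by
        rw [smul_dotProduct, smul_eq_mul, dotProduct_comm, hsymm y x]
      rw [hgdef]
      simp only
      rw [mul_assoc c₀, ← Real.exp_add, ← Real.exp_add]
      congr 1
      rw [hqsub x y, e1]
      ring
    rw [hpt, integral_const_mul]
  -- Part 1 : smoothness
  have hF : ContDiff ℝ (⊤ : ℕ∞) (fun ξ : Fin n → ℝ => ∫ z, Real.exp (ξ ⬝ᵥ z) * g z ∂μ) :=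
    AnalyticOnNhd.contDiff (fun ξ _ => analyticAtF hgc hgi ξ)
  have hmv : ContDiff ℝ (⊤ : ℕ∞) fun x : Fin n → ℝ => G *ᵥ x := by
    have h := (LinearMap.toContinuousLinearMap (Matrix.mulVecLin G)).contDiff
      (n := ((⊤ : ℕ∞) : WithTop ℕ∞))
    have e : ⇑(LinearMap.toContinuousLinearMap (Matrix.mulVecLin G))
        = fun x : Fin n → ℝ => G *ᵥ x := by
      funext x; simp
    rwa [e] at h
  have hqcd : ContDiff ℝ (⊤ : ℕ∞) fun x : Fin n → ℝ => x ⬝ᵥ G *ᵥ x := by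
    have e : (fun x : Fin n → ℝ => x ⬝ᵥ G *ᵥ x)
        = fun x => ∑ i, x i * ∑ j, G i j * x j := by
      funext x; simp [dotProduct, Matrix.mulVec]
    rw [e]
    refine ContDiff.sum fun i _ => ContDiff.mul ?_
      (ContDiff.sum fun j _ => ContDiff.mul contDiff_const ?_)
    · exact (ContinuousLinearMap.proj i : (Fin n → ℝ) →L[ℝ] ℝ).contDiff
    · exact (ContinuousLinearMap.proj j : (Fin n → ℝ) →L[ℝ] ℝ).contDiff
  have part1 : ContDiff ℝ (⊤ : ℕ∞) u := by
    have e : u = fun x => (c₀ * Real.exp (-Real.pi * (x ⬝ᵥ G *ᵥ x))) *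
        ∫ z, Real.exp (((2 * Real.pi) • (G *ᵥ x)) ⬝ᵥ z) * g z ∂μ := funext hurep
    rw [e]
    refine ContDiff.mul (ContDiff.mul contDiff_const ?_) ?_
    · exact Real.contDiff_exp.comp (contDiff_const.mul hqcd)
    · exact hF.comp ((contDiff_const (c := 2 * Real.pi)).smul hmv)
  have part2 : ∀ x, 0 < u x := by
    intro x
    rw [hurep x]
    exact mul_pos (mul_pos hc₀ (Real.exp_pos _)) (Fpos hgc hgi hμ hgpos _)
  refine ⟨part1, part2, ?_⟩
  -- Part 3
  intro x v
  set ξ₀ : Fin n → ℝ := (2 * Real.pi) • (G *ᵥ x) with hξ₀def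
  set η : Fin n → ℝ := (2 * Real.pi) • (G *ᵥ v) with hηdef
  have hline : ∀ t : ℝ, (2 * Real.pi) • (G *ᵥ (x + t • v)) = ξ₀ + t • η := by
    intro t
    rw [Matrix.mulVec_add, Matrix.mulVec_smul, smul_add, smul_comm, hξ₀def, hηdef]
  have hq2 : ∀ t : ℝ, (x + t • v) ⬝ᵥ G *ᵥ (x + t • v)
      = x ⬝ᵥ G *ᵥ x + 2 * t * (x ⬝ᵥ G *ᵥ v) + t ^ 2 * (v ⬝ᵥ G *ᵥ v) := by
    intro t
    rw [hqadd x (t • v), Matrix.mulVec_smul, dotProduct_smul, smul_dotProduct, dotProduct_smul]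
    simp only [smul_eq_mul]
    ring
  have hgc' : Continuous fun z => (η ⬝ᵥ z) * g z := (continuous_dot η).mul hgc
  have hgi' := hgi_mul_dot hgc hgi η
  have hM : ∀ t : ℝ, HasDerivAt (fun s => ∫ z, Real.exp ((ξ₀ + s • η) ⬝ᵥ z) * g z ∂μ)
      (∫ z, Real.exp ((ξ₀ + t • η) ⬝ᵥ z) * ((η ⬝ᵥ z) * g z) ∂μ) t :=
    hasDerivAt_M hgc hgi ξ₀ η
  have hM1 : ∀ t : ℝ,
      HasDerivAt (fun s => ∫ z, Real.exp ((ξ₀ + s • η) ⬝ᵥ z) * ((η ⬝ᵥ z) * g z) ∂μ)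
      (∫ z, Real.exp ((ξ₀ + t • η) ⬝ᵥ z) * ((η ⬝ᵥ z) * ((η ⬝ᵥ z) * g z)) ∂μ) t :=
    hasDerivAt_M hgc' hgi' ξ₀ η
  have hMpos : ∀ t : ℝ, 0 < ∫ z, Real.exp ((ξ₀ + t • η) ⬝ᵥ z) * g z ∂μ := fun t =>
    Fpos hgc hgi hμ hgpos _
  have hφ : (fun t : ℝ => Real.log (u (x + t • v)))
      = fun t : ℝ => (Real.log c₀ + -Real.pi * (x ⬝ᵥ G *ᵥ x))
          + (-2 * Real.pi * (x ⬝ᵥ G *ᵥ v)) * t + (-Real.pi * (v ⬝ᵥ G *ᵥ v)) * t ^ 2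
          + Real.log (∫ z, Real.exp ((ξ₀ + t • η) ⬝ᵥ z) * g z ∂μ) := by
    funext t
    rw [hurep (x + t • v)]
    simp only [hline t]
    rw [Real.log_mul (mul_pos hc₀ (Real.exp_pos _)).ne' (hMpos t).ne',
      Real.log_mul hc₀.ne' (Real.exp_ne_zero _), Real.log_exp, hq2 t]
    ring
  set ψ : ℝ → ℝ := fun t => -2 * Real.pi * (x ⬝ᵥ G *ᵥ v)
      + -Real.pi * (v ⬝ᵥ G *ᵥ v) * (2 * t)
      + (∫ z, Real.exp ((ξ₀ + t • η) ⬝ᵥ z) * ((η ⬝ᵥ z) * g z) ∂μ)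
        / (∫ z, Real.exp ((ξ₀ + t • η) ⬝ᵥ z) * g z ∂μ) with hψdef
  have hd1 : ∀ t : ℝ, HasDerivAt (fun t : ℝ => Real.log (u (x + t • v))) (ψ t) t := by
    intro t
    rw [hφ, hψdef]
    have h1 : HasDerivAt (fun s : ℝ => (Real.log c₀ + -Real.pi * (x ⬝ᵥ G *ᵥ x))
        + (-2 * Real.pi * (x ⬝ᵥ G *ᵥ v)) * s + (-Real.pi * (v ⬝ᵥ G *ᵥ v)) * s ^ 2
        + Real.log (∫ z, Real.exp ((ξ₀ + s • η) ⬝ᵥ z) * g z ∂μ))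
        (((0 + -2 * Real.pi * (x ⬝ᵥ G *ᵥ v) * 1) + -Real.pi * (v ⬝ᵥ G *ᵥ v) * (2 * t ^ 1))
          + (∫ z, Real.exp ((ξ₀ + t • η) ⬝ᵥ z) * ((η ⬝ᵥ z) * g z) ∂μ)
            / (∫ z, Real.exp ((ξ₀ + t • η) ⬝ᵥ z) * g z ∂μ)) t := by
      refine HasDerivAt.add ?_ ((hM t).log (hMpos t).ne')
      refine HasDerivAt.add (HasDerivAt.add (hasDerivAt_const t _) ?_) ?_
      · exact (hasDerivAt_id t).const_mul (-2 * Real.pi * (x ⬝ᵥ G *ᵥ v))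
      · exact (hasDerivAt_pow 2 t).const_mul (-Real.pi * (v ⬝ᵥ G *ᵥ v))
    convert h1 using 1
    ring
  have hdφ : deriv (fun t : ℝ => Real.log (u (x + t • v))) = ψ :=
    funext fun t => (hd1 t).deriv
  have hd2 : HasDerivAt ψ
      ((0 + -Real.pi * (v ⬝ᵥ G *ᵥ v) * (2 * 1)) +
        ((∫ z, Real.exp ((ξ₀ + (0:ℝ) • η) ⬝ᵥ z) * ((η ⬝ᵥ z) * ((η ⬝ᵥ z) * g z)) ∂μ) *
           (∫ z, Real.exp ((ξ₀ + (0:ℝ) • η) ⬝ᵥ z) * g z ∂μ) -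
         (∫ z, Real.exp ((ξ₀ + (0:ℝ) • η) ⬝ᵥ z) * ((η ⬝ᵥ z) * g z) ∂μ) *
           (∫ z, Real.exp ((ξ₀ + (0:ℝ) • η) ⬝ᵥ z) * ((η ⬝ᵥ z) * g z) ∂μ)) /
         (∫ z, Real.exp ((ξ₀ + (0:ℝ) • η) ⬝ᵥ z) * g z ∂μ) ^ 2) 0 := by
    rw [hψdef]
    refine HasDerivAt.add (HasDerivAt.add (hasDerivAt_const 0 _) ?_)
      ((hM1 0).div (hM 0) (hMpos 0).ne')
    exact ((hasDerivAt_id (0:ℝ)).const_mul (2:ℝ)).const_mul (-Real.pi * (v ⬝ᵥ G *ᵥ v))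
  have hCS : (∫ z, Real.exp ((ξ₀ + (0:ℝ) • η) ⬝ᵥ z) * ((η ⬝ᵥ z) * g z) ∂μ) *
        (∫ z, Real.exp ((ξ₀ + (0:ℝ) • η) ⬝ᵥ z) * ((η ⬝ᵥ z) * g z) ∂μ)
      ≤ (∫ z, Real.exp ((ξ₀ + (0:ℝ) • η) ⬝ᵥ z) * ((η ⬝ᵥ z) * ((η ⬝ᵥ z) * g z)) ∂μ) *
        (∫ z, Real.exp ((ξ₀ + (0:ℝ) • η) ⬝ᵥ z) * g z ∂μ) :=
    cauchy_schwarz hgc hgi hμ hgpos _ η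
  have h2eq : iteratedDeriv 2 (fun t : ℝ => Real.log (u (x + t • v)))
      = deriv (deriv (fun t : ℝ => Real.log (u (x + t • v)))) := by
    rw [show (2:ℕ) = 1 + 1 from rfl, iteratedDeriv_succ, iteratedDeriv_one]
  rw [h2eq, hdφ, hd2.deriv]
  have hM0 := hMpos 0
  have hdiv : 0 ≤ ((∫ z, Real.exp ((ξ₀ + (0:ℝ) • η) ⬝ᵥ z) * ((η ⬝ᵥ z) * ((η ⬝ᵥ z) * g z)) ∂μ) *
           (∫ z, Real.exp ((ξ₀ + (0:ℝ) • η) ⬝ᵥ z) * g z ∂μ) -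
         (∫ z, Real.exp ((ξ₀ + (0:ℝ) • η) ⬝ᵥ z) * ((η ⬝ᵥ z) * g z) ∂μ) *
           (∫ z, Real.exp ((ξ₀ + (0:ℝ) • η) ⬝ᵥ z) * ((η ⬝ᵥ z) * g z) ∂μ)) /
         (∫ z, Real.exp ((ξ₀ + (0:ℝ) • η) ⬝ᵥ z) * g z ∂μ) ^ 2 :=
    div_nonneg (by linarith) (sq_nonneg _)
  linarith
end

section
/- Large time asymptotics of the anisotropic heat flow: if $u(t,\cdot)=g_{P(t)}*f$ with $P(t)=(G^{-1}+(t-1)A^{-1})^{-1}$, $A\le G$ positive definite, and $f\in L^1(\mathbb{R}^n)$ nonnegative, then for every $x\in\mathbb{R}^n$, $\lim_{t\to\infty} t^{n/2}u(t,\sqrt{t}\,x) = \big(\int_{\mathbb{R}^n} f\big)\, g_A(x)$. -/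
open Matrix MeasureTheory Filter Topology

/-!
Substituting `w = x - y / √t` turns `t ^ (n / 2) * g_{P t} (√t • x - y)` into
`det (t • P t) ^ (1 / 2) * exp (-π ⟪w, (t • P t) w⟫)`, which tends to `g_A x` because
`t • P t = (t⁻¹ • G⁻¹ + (1 - t⁻¹) • A⁻¹)⁻¹ → A`. Since `P t ≥ 0` the exponential factor is at most
`1`, so the integrand against `f` is dominated by a multiple of `|f|`, and dominated convergence
gives the limit `(∫ f) * g_A x`.
-/

namespace Matrix

variable {ι : Type*} [Fintype ι] [DecidableEq ι]

noncomputable def gaussianKernel (P : Matrix ι ι ℝ) (w : ι → ℝ) : ℝ :=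
  P.det ^ ((1 : ℝ) / 2) * Real.exp (-Real.pi * (w ⬝ᵥ P *ᵥ w))

theorem continuous_gaussianKernel (P : Matrix ι ι ℝ) : Continuous (gaussianKernel P) := by
  unfold gaussianKernel
  fun_prop

theorem PosSemidef.gaussianKernel_le {P : Matrix ι ι ℝ} (hP : P.PosSemidef) (w : ι → ℝ) :
    |gaussianKernel P w| ≤ P.det ^ ((1 : ℝ) / 2) := by
  have hq : 0 ≤ w ⬝ᵥ P *ᵥ w := hP.dotProduct_mulVec_nonneg w
  have hexp : Real.exp (-Real.pi * (w ⬝ᵥ P *ᵥ w)) ≤ 1 :=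
    Real.exp_le_one_iff.mpr (mul_nonpos_of_nonpos_of_nonneg (by linarith [Real.pi_pos]) hq)
  have hdet : 0 ≤ P.det ^ ((1 : ℝ) / 2) := Real.rpow_nonneg hP.det_nonneg _
  rw [gaussianKernel, abs_of_nonneg (by positivity)]
  exact mul_le_of_le_one_right hdet hexp

theorem smul_inv_eq_inv_inv_smul (M : Matrix ι ι ℝ) {t : ℝ} (ht : t ≠ 0) :
    t • M⁻¹ = (t⁻¹ • M)⁻¹ := by
  by_cases hM : IsUnit M.det
  · exact (inv_eq_left_inv (by simp [nonsing_inv_mul _ hM, smul_smul, ht])).symm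
  · have : ¬IsUnit (t⁻¹ • M).det := by
      simpa [det_smul, ht] using hM
    rw [nonsing_inv_apply_not_isUnit _ hM, nonsing_inv_apply_not_isUnit _ this, smul_zero]

theorem tendsto_smul_inv_add_smul (B : Matrix ι ι ℝ) {C : Matrix ι ι ℝ} (hC : IsUnit C.det) :
    Tendsto (fun t : ℝ => t • (B + (t - 1) • C)⁻¹) atTop (𝓝 C⁻¹) := by
  have hlin : Tendsto (fun t : ℝ => t⁻¹ • B + (1 - t⁻¹) • C) atTop (𝓝 C) := by
    have h := ((tendsto_inv_atTop_zero (𝕜 := ℝ)).smul_const B).add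
      (((tendsto_const_nhds (x := (1 : ℝ))).sub tendsto_inv_atTop_zero).smul_const C)
    simpa using h
  have hinv : ContinuousAt Inv.inv C :=
    continuousAt_matrix_inv _ (NormedRing.inverse_continuousAt hC.unit)
  refine (hinv.tendsto.comp hlin).congr' ?_
  filter_upwards [eventually_gt_atTop 0] with t ht
  rw [Function.comp_apply, smul_inv_eq_inv_inv_smul _ ht.ne', smul_add, smul_smul]
  congr 3
  field_simp

variable {M : ℝ → Matrix ι ι ℝ} {A : Matrix ι ι ℝ}

theorem tendsto_rpow_mul_det_rpow (hM : Tendsto (fun t : ℝ => t • M t) atTop (𝓝 A))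
    (hA : 0 < A.det) :
    Tendsto (fun t : ℝ => t ^ ((Fintype.card ι : ℝ) / 2) * (M t).det ^ ((1 : ℝ) / 2)) atTop
      (𝓝 (A.det ^ ((1 : ℝ) / 2))) := by
  have hdet : Tendsto (fun t => (t • M t).det) atTop (𝓝 A.det) :=
    (continuous_id.matrix_det.tendsto A).comp hM
  have hsqrt := (Real.continuousAt_rpow_const _ _ (Or.inr one_half_pos.le)).tendsto.comp hdet
  refine hsqrt.congr' ?_
  filter_upwards [eventually_gt_atTop 0, hdet.eventually (lt_mem_nhds hA)] with t ht hpos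
  rw [det_smul] at hpos
  have hMt : 0 ≤ (M t).det := (pos_of_mul_pos_right hpos (by positivity)).le
  rw [Function.comp_apply, det_smul, Real.mul_rpow (by positivity) hMt, ← Real.rpow_natCast,
    ← Real.rpow_mul ht.le, mul_one_div]

theorem tendsto_rpow_mul_gaussianKernel_sqrt_smul_sub
    (hM : Tendsto (fun t : ℝ => t • M t) atTop (𝓝 A)) (hA : 0 < A.det) (x y : ι → ℝ) :
    Tendsto (fun t : ℝ => t ^ ((Fintype.card ι : ℝ) / 2) *
      gaussianKernel (M t) (√t • x - y)) atTop (𝓝 (gaussianKernel A x)) := by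
  have hshift : Tendsto (fun t : ℝ => x - (√t)⁻¹ • y) atTop (𝓝 x) := by
    simpa using tendsto_const_nhds.sub
      ((tendsto_inv_atTop_zero.comp Real.tendsto_sqrt_atTop).smul_const y)
  have hquad : Continuous fun p : Matrix ι ι ℝ × (ι → ℝ) => p.2 ⬝ᵥ p.1 *ᵥ p.2 :=
    continuous_snd.dotProduct (continuous_fst.matrix_mulVec continuous_snd)
  have hform := (hquad.tendsto (A, x)).comp (hM.prodMk_nhds hshift)
  refine ((tendsto_rpow_mul_det_rpow hM hA).mul
    ((Real.continuous_exp.tendsto _).comp (hform.const_mul (-Real.pi)))).congr' ?_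
  filter_upwards [eventually_gt_atTop 0] with t ht
  have hs : √t ≠ 0 := (Real.sqrt_pos.2 ht).ne'
  have hw : √t • x - y = √t • (x - (√t)⁻¹ • y) := by
    rw [smul_sub, smul_smul, mul_inv_cancel₀ hs, one_smul]
  simp only [gaussianKernel, Function.comp_apply, hw, mulVec_smul, smul_mulVec, dotProduct_smul,
    smul_dotProduct, smul_eq_mul]
  rw [← mul_assoc (√t), Real.mul_self_sqrt ht.le]
  ring

theorem tendsto_rpow_mul_integral_gaussianKernel_mul
    (hM : Tendsto (fun t : ℝ => t • M t) atTop (𝓝 A)) (hA : 0 < A.det)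
    (hMpsd : ∀ᶠ t in atTop, (M t).PosSemidef) {f : (ι → ℝ) → ℝ} (hf : Integrable f)
    (x : ι → ℝ) :
    Tendsto (fun t : ℝ => t ^ ((Fintype.card ι : ℝ) / 2) *
      ∫ y, gaussianKernel (M t) (√t • x - y) * f y) atTop
      (𝓝 ((∫ y, f y) * gaussianKernel A x)) := by
  set d : ℝ := (Fintype.card ι : ℝ) / 2
  simp_rw [← integral_const_mul, ← mul_assoc, mul_comm (∫ y, f y), ← integral_const_mul]
  refine tendsto_integral_filter_of_dominated_convergence
    (fun y => (A.det ^ ((1 : ℝ) / 2) + 1) * ‖f y‖) ?_ ?_ (hf.norm.const_mul _) ?_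
  · refine .of_forall fun t => ?_
    exact (continuous_const.mul ((continuous_gaussianKernel _).comp
      (continuous_const.sub continuous_id))).aestronglyMeasurable.mul hf.1
  · filter_upwards [hMpsd, eventually_gt_atTop 0,
      (tendsto_rpow_mul_det_rpow hM hA).eventually (gt_mem_nhds (lt_add_one _))]
      with t hpsd ht hcoef
    refine .of_forall fun y => ?_
    have htd : 0 ≤ t ^ d := by positivity
    calc ‖t ^ d * gaussianKernel (M t) (√t • x - y) * f y‖
        = t ^ d * |gaussianKernel (M t) (√t • x - y)| * ‖f y‖ := by
          rw [norm_mul, norm_mul, Real.norm_of_nonneg htd, Real.norm_eq_abs]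
      _ ≤ t ^ d * (M t).det ^ ((1 : ℝ) / 2) * ‖f y‖ := by
          gcongr
          exact hpsd.gaussianKernel_le _
      _ ≤ (A.det ^ ((1 : ℝ) / 2) + 1) * ‖f y‖ := by gcongr
  · exact .of_forall fun y =>
      (tendsto_rpow_mul_gaussianKernel_sqrt_smul_sub hM hA x y).mul_const (f y)

end Matrix

theorem stmt8_general (n : ℕ) (A G : Matrix (Fin n) (Fin n) ℝ) (hA : A.PosDef) (hG : G.PosDef)
    (f : (Fin n → ℝ) → ℝ) (hf : Integrable f)
    (P : ℝ → Matrix (Fin n) (Fin n) ℝ)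
    (hP : ∀ t, P t = (G⁻¹ + (t - 1) • A⁻¹)⁻¹)
    (u : ℝ → (Fin n → ℝ) → ℝ)
    (hu : ∀ t x, u t x = ∫ y, (P t).det ^ ((1:ℝ)/2) *
        Real.exp (-Real.pi * ((x - y) ⬝ᵥ ((P t).mulVec (x - y)))) * f y)
    (x : Fin n → ℝ) :
    Tendsto (fun t : ℝ => t ^ ((n : ℝ)/2) * u t (Real.sqrt t • x)) atTop
      (nhds ((∫ y, f y) *
        (A.det ^ ((1:ℝ)/2) * Real.exp (-Real.pi * (x ⬝ᵥ (A.mulVec x)))))) := by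
  have hPlim : Tendsto (fun t => t • P t) atTop (𝓝 A) := by
    simpa only [hP, nonsing_inv_nonsing_inv A hA.det_pos.ne'.isUnit] using
      tendsto_smul_inv_add_smul G⁻¹ hA.inv.det_pos.ne'.isUnit
  have hPpsd : ∀ᶠ t in atTop, (P t).PosSemidef := by
    filter_upwards [eventually_ge_atTop 1] with t ht
    rw [hP]
    exact (hG.inv.add_posSemidef (hA.inv.posSemidef.smul (sub_nonneg.2 ht))).inv.posSemidef
  simpa only [hu, gaussianKernel, Fintype.card_fin] using
    tendsto_rpow_mul_integral_gaussianKernel_mul hPlim hA.det_pos hPpsd hf x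

/-- Large time asymptotics of the anisotropic heat flow. -/
theorem stmt8 (n : ℕ) (A G : Matrix (Fin n) (Fin n) ℝ) (hA : A.PosDef) (hG : G.PosDef)
    (hAG : (G - A).PosSemidef)
    (f : (Fin n → ℝ) → ℝ) (hf : Integrable f) (hpos : ∀ y, 0 ≤ f y)
    (P : ℝ → Matrix (Fin n) (Fin n) ℝ)
    (hP : ∀ t, P t = (G⁻¹ + (t - 1) • A⁻¹)⁻¹)
    (u : ℝ → (Fin n → ℝ) → ℝ)
    (hu : ∀ t x, u t x = ∫ y, (P t).det ^ ((1:ℝ)/2) *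
        Real.exp (-Real.pi * ((x - y) ⬝ᵥ ((P t).mulVec (x - y)))) * f y)
    (x : Fin n → ℝ) :
    Tendsto (fun t : ℝ => t ^ ((n : ℝ)/2) * u t (Real.sqrt t • x)) atTop
      (nhds ((∫ y, f y) *
        (A.det ^ ((1:ℝ)/2) * Real.exp (-Real.pi * (x ⬝ᵥ (A.mulVec x)))))) :=
  stmt8_general n A G hA hG f hf P hP u hu x
end

section
/- Harmonic mean superadditivity under congruence: for positive definite self-adjoint transformations $X,Y$ on $\mathbb{R}^m$ and any linear map $S:\mathbb{R}^n\to\mathbb{R}^m$, writing $X:Y=(X^{-1}+Y^{-1})^{-1}$, one has $S^*(X:Y)S \le (S^*XS):(S^*YS)$ whenever $S^*XS$ and $S^*YS$ are positive definite. -/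
/-!
The harmonic mean has the variational description
`⟪x, (A : B) x⟫ = min {⟪a, A a⟫ + ⟪b, B b⟫ | a + b = x}`: the lower bound is completing the
square, `2 ⟪a, w⟫ ≤ ⟪a, A a⟫ + ⟪w, A⁻¹ w⟫`, and the minimum is attained at
`a = A⁻¹ w`, `b = B⁻¹ w` with `w = (A : B) x`. Take the minimising split `x = a + b` for
`Sᵀ X S` and `Sᵀ Y S`; then `S x = S a + S b` is an admissible split for `X : Y`, so
`⟪S x, (X : Y) S x⟫ ≤ ⟪S a, X S a⟫ + ⟪S b, Y S b⟫ = ⟪x, ((Sᵀ X S) : (Sᵀ Y S)) x⟫`.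
-/

open Matrix

namespace Matrix

variable {m n : Type*} [Fintype m] [Fintype n]

lemma dotProduct_transpose_mul_mul_mulVec (M : Matrix m m ℝ) (S : Matrix m n ℝ) (v : n → ℝ) :
    v ⬝ᵥ ((Sᵀ * M * S) *ᵥ v) = (S *ᵥ v) ⬝ᵥ (M *ᵥ (S *ᵥ v)) := by
  rw [← mulVec_mulVec, ← mulVec_mulVec, dotProduct_mulVec v Sᵀ, vecMul_transpose]

variable [DecidableEq n]

noncomputable def harmonicMean (A B : Matrix n n ℝ) : Matrix n n ℝ := (A⁻¹ + B⁻¹)⁻¹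

namespace PosDef

variable {A B : Matrix n n ℝ}

lemma mulVec_inv_mulVec (hA : A.PosDef) (v : n → ℝ) : A *ᵥ (A⁻¹ *ᵥ v) = v := by
  rw [mulVec_mulVec, mul_nonsing_inv A ((isUnit_iff_isUnit_det A).mp hA.isUnit), one_mulVec]

lemma two_mul_dotProduct_le (hA : A.PosDef) (a w : n → ℝ) :
    2 * (a ⬝ᵥ w) ≤ a ⬝ᵥ (A *ᵥ a) + w ⬝ᵥ (A⁻¹ *ᵥ w) := by
  have hsq : 0 ≤ (a - A⁻¹ *ᵥ w) ⬝ᵥ (A *ᵥ (a - A⁻¹ *ᵥ w)) := by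
    simpa using hA.posSemidef.dotProduct_mulVec_nonneg (a - A⁻¹ *ᵥ w)
  have hcross : (A⁻¹ *ᵥ w) ⬝ᵥ (A *ᵥ a) = a ⬝ᵥ w := by
    have hAT : Aᵀ = A := hA.isHermitian
    rw [dotProduct_mulVec, ← mulVec_transpose, hAT, hA.mulVec_inv_mulVec,
      dotProduct_comm]
  rw [mulVec_sub, hA.mulVec_inv_mulVec, sub_dotProduct, dotProduct_sub, dotProduct_sub,
    hcross, dotProduct_comm (A⁻¹ *ᵥ w) w] at hsq
  linarith

lemma inv_add_inv_mulVec_harmonicMean_mulVec (hA : A.PosDef) (hB : B.PosDef) (v : n → ℝ) :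
    (A⁻¹ + B⁻¹) *ᵥ (harmonicMean A B *ᵥ v) = v :=
  (hA.inv.add hB.inv).mulVec_inv_mulVec v

lemma dotProduct_harmonicMean_mulVec_le (hA : A.PosDef) (hB : B.PosDef) (a b : n → ℝ) :
    (a + b) ⬝ᵥ (harmonicMean A B *ᵥ (a + b)) ≤ a ⬝ᵥ (A *ᵥ a) + b ⬝ᵥ (B *ᵥ b) := by
  set w := harmonicMean A B *ᵥ (a + b)
  have hw : (a + b) ⬝ᵥ w = w ⬝ᵥ (A⁻¹ *ᵥ w) + w ⬝ᵥ (B⁻¹ *ᵥ w) := by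
    have hsplit : A⁻¹ *ᵥ w + B⁻¹ *ᵥ w = a + b := by
      rw [← add_mulVec, inv_add_inv_mulVec_harmonicMean_mulVec hA hB]
    rw [← hsplit, add_dotProduct, dotProduct_comm _ w, dotProduct_comm _ w]
  have ha := hA.two_mul_dotProduct_le a w
  have hb := hB.two_mul_dotProduct_le b w
  rw [add_dotProduct] at hw ⊢
  linarith

lemma exists_dotProduct_harmonicMean_mulVec_eq (hA : A.PosDef) (hB : B.PosDef) (x : n → ℝ) :
    ∃ a b, a + b = x ∧
      x ⬝ᵥ (harmonicMean A B *ᵥ x) = a ⬝ᵥ (A *ᵥ a) + b ⬝ᵥ (B *ᵥ b) := by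
  set w := harmonicMean A B *ᵥ x
  refine ⟨A⁻¹ *ᵥ w, B⁻¹ *ᵥ w, ?_, ?_⟩
  · rw [← add_mulVec, inv_add_inv_mulVec_harmonicMean_mulVec hA hB]
  · rw [hA.mulVec_inv_mulVec, hB.mulVec_inv_mulVec, ← add_dotProduct, ← add_mulVec,
      inv_add_inv_mulVec_harmonicMean_mulVec hA hB, dotProduct_comm]

end PosDef

theorem PosSemidef.harmonicMean_transpose_mul_mul_sub {X Y : Matrix m m ℝ} [DecidableEq m]
    (hX : X.PosDef) (hY : Y.PosDef) (S : Matrix m n ℝ)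
    (hXS : (Sᵀ * X * S).PosDef) (hYS : (Sᵀ * Y * S).PosDef) :
    (harmonicMean (Sᵀ * X * S) (Sᵀ * Y * S) - Sᵀ * harmonicMean X Y * S).PosSemidef := by
  have hH : (harmonicMean X Y).PosDef := (hX.inv.add hY.inv).inv
  refine .of_dotProduct_mulVec_nonneg
    ((hXS.inv.add hYS.inv).inv.isHermitian.sub (isHermitian_conjTranspose_mul_mul S hH.isHermitian)) ?_
  intro x
  obtain ⟨a, b, rfl, hmin⟩ := hXS.exists_dotProduct_harmonicMean_mulVec_eq hYS x
  have hle := PosDef.dotProduct_harmonicMean_mulVec_le hX hY (S *ᵥ a) (S *ᵥ b)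
  rw [← mulVec_add] at hle
  rwa [star_trivial, sub_mulVec, dotProduct_sub, sub_nonneg, hmin,
    dotProduct_transpose_mul_mul_mulVec, dotProduct_transpose_mul_mul_mulVec,
    dotProduct_transpose_mul_mul_mulVec]

end Matrix

/-- Harmonic mean superadditivity under congruence. -/
theorem stmt9 (n m : ℕ) (X Y : Matrix (Fin m) (Fin m) ℝ)
    (hX : X.PosDef) (hY : Y.PosDef)
    (S : Matrix (Fin m) (Fin n) ℝ)
    (hXS : (Sᵀ * X * S).PosDef) (hYS : (Sᵀ * Y * S).PosDef) :
    (((Sᵀ * X * S)⁻¹ + (Sᵀ * Y * S)⁻¹)⁻¹ - Sᵀ * (X⁻¹ + Y⁻¹)⁻¹ * S).PosSemidef :=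
  PosSemidef.harmonicMean_transpose_mul_mul_sub hX hY S hXS hYS
end

section
/- First-order optimality for the gaussian Brascamp--Lieb functional: let $\Phi(\mathbf{X})=\sum_{j=1}^m c_j\log\det X_j - \log\det\big(\sum_{j=1}^m c_jB_j^*X_jB_j+\mathcal{Q}\big)$ defined for positive definite $X_j\le G_j$ making $\widetilde{M}(\mathbf{X}):=\sum_j c_jB_j^*X_jB_j+\mathcal{Q}$ positive definite. If $\mathbf{A}$ (with $0<A_j\le G_j$, $\widetilde{M}(\mathbf{A})>0$) minimizes $\Phi$ over all $\mathbf{X}\le\mathbf{G}$, then for each $j$: (i) $c_j\big(A_j^{-1}-B_j\widetilde{M}(\mathbf{A})^{-1}B_j^*\big)\le 0$, and (ii) $\big(A_j^{-1}-B_j\widetilde{M}(\mathbf{A})^{-1}B_j^*\big)(G_j-A_j)=0$. -/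
open Matrix BigOperators

/-!
Perturb one block, $A_j \mapsto A_j + tD$, along a direction $D$ that keeps the constraints
for small $t > 0$. Since $\frac{d}{dt}\log\det(X + tD)|_{t=0} = \operatorname{tr}(X^{-1}D)$, the
derivative of $\Phi$ along this path is $\operatorname{tr}(c_j(A_j^{-1} - B_j\widetilde M^{-1}B_j^*)D)$,
and minimality makes it nonnegative. The directions $D = -xx^*$ give (i). The directions
$\pm(G_j - A_j)$ give $\operatorname{tr}(P(G_j - A_j)) = 0$ for the positive semidefinite
$P = -c_j(A_j^{-1} - B_j\widetilde M^{-1}B_j^*)$, and a vanishing trace of a product of two positive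
semidefinite matrices forces the product itself to vanish, which is (ii).
-/

open Filter Topology
open scoped ComplexOrder

lemma Fintype.sum_apply_update {ι M : Type*} [Fintype ι] [DecidableEq ι] [AddCommGroup M]
    {α : ι → Type*} (f : ∀ i, α i → M) (g : ∀ i, α i) (j : ι) (v : α j) :
    ∑ i, f i (Function.update g j v i) = ∑ i, f i (g i) + (f j v - f j (g j)) := by
  simp_rw [Function.apply_update f g j v]
  rw [Finset.sum_update_of_mem (Finset.mem_univ j), ← Finset.add_sum_erase _ _ (Finset.mem_univ j),
    Finset.sdiff_singleton_eq_erase]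
  abel

lemma HasDerivAt.nonneg_of_eventually_le {f : ℝ → ℝ} {f' : ℝ} (hf : HasDerivAt f f' 0)
    (h : ∀ᶠ t in 𝓝[>] 0, f 0 ≤ f t) : 0 ≤ f' := by
  refine ge_of_tendsto hf.tendsto_slope_zero_right ?_
  filter_upwards [h, self_mem_nhdsWithin] with t hle ht
  simpa using smul_nonneg (inv_nonneg.2 (Set.mem_Ioi.1 ht).le) (sub_nonneg.2 hle)

namespace Matrix

variable {n : Type*} [Fintype n] [DecidableEq n]

theorem hasDerivAt_det_one_add_smul {𝕜 : Type*} [NontriviallyNormedField 𝕜] (M : Matrix n n 𝕜) :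
    HasDerivAt (fun t : 𝕜 => (1 + t • M).det) M.trace 0 := by
  set P : Polynomial 𝕜 := (1 + (Polynomial.X : Polynomial 𝕜) • M.map Polynomial.C).det with hP
  have hPeval : ∀ t : 𝕜, P.eval t = (1 + t • M).det := fun t => by
    rw [det_one_add_smul]
    conv_lhs => rw [hP, det_one_add_X_smul]
    simp
  convert P.hasDerivAt 0 using 1
  · exact funext fun t => (hPeval t).symm
  · rw [hP, derivative_det_one_add_X_smul]

theorem hasDerivAt_det_add_smul {𝕜 : Type*} [NontriviallyNormedField 𝕜] {X : Matrix n n 𝕜}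
    (hX : IsUnit X) (D : Matrix n n 𝕜) :
    HasDerivAt (fun t : 𝕜 => (X + t • D).det) (X.det * (X⁻¹ * D).trace) 0 := by
  have hfactor : ∀ t : 𝕜, X + t • D = X * (1 + t • (X⁻¹ * D)) := fun t => by
    rw [Matrix.mul_add, Matrix.mul_one, Matrix.mul_smul,
      mul_nonsing_inv_cancel_left _ _ ((isUnit_iff_isUnit_det _).1 hX)]
  simpa [hfactor] using (hasDerivAt_det_one_add_smul (X⁻¹ * D)).const_mul X.det

theorem hasDerivAt_log_det_add_smul {X : Matrix n n ℝ} (hX : IsUnit X) (D : Matrix n n ℝ) :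
    HasDerivAt (fun t : ℝ => Real.log (X + t • D).det) (X⁻¹ * D).trace 0 := by
  have hdet : X.det ≠ 0 := ((isUnit_iff_isUnit_det _).1 hX).ne_zero
  simpa [hdet] using (hasDerivAt_det_add_smul hX D).log (by simpa using hdet)

omit [DecidableEq n] in
theorem PosDef.eventually_add_smul {X E : Matrix n n ℝ} (hX : X.PosDef) (hE : E.IsHermitian) :
    ∀ᶠ t : ℝ in 𝓝 0, (X + t • E).PosDef := by
  have hcont : Continuous fun p : ℝ × (n → ℝ) => p.2 ⬝ᵥ (X + p.1 • E) *ᵥ p.2 := by fun_prop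
  -- positivity on the compact unit sphere survives small perturbations; homogeneity does the rest
  have hsphere : ∀ᶠ t : ℝ in 𝓝 0, ∀ y ∈ Metric.sphere (0 : n → ℝ) 1,
      0 < y ⬝ᵥ (X + t • E) *ᵥ y := by
    refine (isCompact_sphere 0 1).eventually_forall_of_forall_eventually fun y hy => ?_
    refine (hcont.tendsto (0, y)).eventually (lt_mem_nhds ?_)
    simpa using hX.dotProduct_mulVec_pos (ne_zero_of_mem_unit_sphere ⟨y, hy⟩)
  filter_upwards [hsphere] with t ht
  refine .of_dotProduct_mulVec_pos (hX.isHermitian.add (hE.smul (.all t))) fun x hx => ?_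
  have hnx : 0 < ‖x‖ := norm_pos_iff.2 hx
  have := ht (‖x‖⁻¹ • x) (by simp [norm_smul, hnx.ne'])
  rw [mulVec_smul, dotProduct_smul, smul_dotProduct, smul_smul] at this
  simpa using pos_of_mul_pos_right this (by positivity)

open scoped MatrixOrder in
theorem PosSemidef.exists_eq_conjTranspose_mul_self {𝕜 : Type*} [RCLike 𝕜] {P : Matrix n n 𝕜}
    (hP : P.PosSemidef) : ∃ R : Matrix n n 𝕜, P = Rᴴ * R := by
  refine ⟨CFC.sqrt P, ?_⟩
  rw [(nonneg_iff_posSemidef.1 (CFC.sqrt_nonneg P)).isHermitian.eq,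
    CFC.sqrt_mul_sqrt_self P hP.nonneg]

theorem PosSemidef.mul_eq_zero_of_trace_mul_eq_zero {𝕜 : Type*} [RCLike 𝕜] {P D : Matrix n n 𝕜}
    (hP : P.PosSemidef) (hD : D.PosSemidef) (h : (P * D).trace = 0) : P * D = 0 := by
  obtain ⟨R, rfl⟩ := hP.exists_eq_conjTranspose_mul_self
  obtain ⟨T, rfl⟩ := hD.exists_eq_conjTranspose_mul_self
  have hTR : T * Rᴴ = 0 := by
    rw [← trace_conjTranspose_mul_self_eq_zero_iff, ← h, conjTranspose_mul,
      conjTranspose_conjTranspose, Matrix.mul_assoc, trace_mul_comm R, trace_mul_comm (Rᴴ * R)]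
    simp only [Matrix.mul_assoc]
  calc Rᴴ * R * (Tᴴ * T) = Rᴴ * (T * Rᴴ)ᴴ * T := by
        simp only [conjTranspose_mul, conjTranspose_conjTranspose, Matrix.mul_assoc]
    _ = 0 := by simp [hTR]

end Matrix

namespace BrascampLieb

open Function

variable {ι N : Type*} [Fintype ι] [DecidableEq ι] [Fintype N] [DecidableEq N]
  {d : ι → Type*} [∀ j, Fintype (d j)] [∀ j, DecidableEq (d j)]
  (B : ∀ j, Matrix (d j) N ℝ) (c : ι → ℝ) (Q : Matrix N N ℝ)

/-- The paper's $\widetilde{M}(\mathbf X)$; `functional` below is its $\Phi$. -/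
def mTilde (X : ∀ j, Matrix (d j) (d j) ℝ) : Matrix N N ℝ :=
  ∑ j, c j • ((B j)ᵀ * X j * B j) + Q

noncomputable def functional (X : ∀ j, Matrix (d j) (d j) ℝ) : ℝ :=
  ∑ j, c j * Real.log (X j).det - Real.log (mTilde B c Q X).det

noncomputable def partialGrad (X : ∀ j, Matrix (d j) (d j) ℝ) (j : ι) : Matrix (d j) (d j) ℝ :=
  c j • ((X j)⁻¹ - B j * (mTilde B c Q X)⁻¹ * (B j)ᵀ)

def IsFeasibleDirection {p : Type*} [Fintype p] (G X D : Matrix p p ℝ) : Prop :=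
  ∀ᶠ t in 𝓝[>] (0 : ℝ), (X + t • D).PosDef ∧ (G - (X + t • D)).PosSemidef

lemma isFeasibleDirection_neg {p : Type*} [Fintype p] {G X P : Matrix p p ℝ} (hX : X.PosDef)
    (hGX : (G - X).PosSemidef) (hP : P.PosSemidef) : IsFeasibleDirection G X (-P) := by
  filter_upwards [nhdsWithin_le_nhds (hX.eventually_add_smul hP.isHermitian.neg),
    self_mem_nhdsWithin] with t hpos ht
  refine ⟨hpos, ?_⟩
  rw [show G - (X + t • -P) = G - X + t • P by module]
  exact hGX.add (hP.smul (Set.mem_Ioi.1 ht).le)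

lemma isFeasibleDirection_sub_self {p : Type*} [Fintype p] {G X : Matrix p p ℝ} (hX : X.PosDef)
    (hGX : (G - X).PosSemidef) : IsFeasibleDirection G X (G - X) := by
  filter_upwards [Ioo_mem_nhdsGT one_pos] with t ht
  refine ⟨hX.add_posSemidef (hGX.smul ht.1.le), ?_⟩
  rw [show G - (X + t • (G - X)) = (1 - t) • (G - X) by module]
  exact hGX.smul (sub_nonneg.2 ht.2.le)

omit [DecidableEq ι] in
lemma isHermitian_partialGrad {X : ∀ j, Matrix (d j) (d j) ℝ} {j : ι} (hX : (X j).IsHermitian)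
    (hM : (mTilde B c Q X).IsHermitian) : (partialGrad B c Q X j).IsHermitian := by
  have hBMB := isHermitian_mul_mul_conjTranspose (B j) hM.inv
  rw [conjTranspose_eq_transpose_of_trivial] at hBMB
  exact (hX.inv.sub hBMB).smul (.all _)

omit [Fintype N] [DecidableEq N] [∀ j, DecidableEq (d j)] in
lemma mTilde_update (X : ∀ j, Matrix (d j) (d j) ℝ) (j : ι) (D : Matrix (d j) (d j) ℝ) (t : ℝ) :
    mTilde B c Q (update X j (X j + t • D)) = mTilde B c Q X + t • (c j • ((B j)ᵀ * D * B j)) := by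
  rw [mTilde, Fintype.sum_apply_update (fun k (Y : Matrix (d k) (d k) ℝ) => c k • ((B k)ᵀ * Y * B k)),
    mTilde]
  simp only [Matrix.mul_add, Matrix.add_mul, Matrix.mul_smul, Matrix.smul_mul]
  module

lemma functional_update (X : ∀ j, Matrix (d j) (d j) ℝ) (j : ι) (Y : Matrix (d j) (d j) ℝ) :
    functional B c Q (update X j Y) = ∑ k, c k * Real.log (X k).det
      + (c j * Real.log Y.det - c j * Real.log (X j).det)
      - Real.log (mTilde B c Q (update X j Y)).det := by
  rw [functional, Fintype.sum_apply_update (fun k (Y : Matrix (d k) (d k) ℝ) => c k * Real.log Y.det)]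

theorem hasDerivAt_functional_update {A : ∀ j, Matrix (d j) (d j) ℝ} {j : ι} (hA : IsUnit (A j))
    (hM : IsUnit (mTilde B c Q A)) (D : Matrix (d j) (d j) ℝ) :
    HasDerivAt (fun t : ℝ => functional B c Q (update A j (A j + t • D)))
      (partialGrad B c Q A j * D).trace 0 := by
  have hfun : (fun t : ℝ => functional B c Q (update A j (A j + t • D))) = fun t =>
      ∑ k, c k * Real.log (A k).det + (c j * Real.log (A j + t • D).det - c j * Real.log (A j).det)
        - Real.log (mTilde B c Q A + t • (c j • ((B j)ᵀ * D * B j))).det := by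
    ext t
    rw [functional_update, mTilde_update]
  rw [hfun]
  refine ((((hasDerivAt_log_det_add_smul hA D).const_mul (c j)).sub_const _).const_add _ |>.sub
    (hasDerivAt_log_det_add_smul hM _)).congr_deriv ?_
  have hcycle : ((mTilde B c Q A)⁻¹ * ((B j)ᵀ * D * B j)).trace
      = (B j * (mTilde B c Q A)⁻¹ * (B j)ᵀ * D).trace := by
    simp only [← Matrix.mul_assoc]
    rw [trace_mul_comm _ (B j)]
    simp only [Matrix.mul_assoc]
  simp only [partialGrad, smul_mul_assoc, trace_smul, Matrix.sub_mul, trace_sub, Matrix.mul_smul,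
    hcycle, smul_eq_mul]
  ring

section Optimality

variable {B c Q} {G A : ∀ j, Matrix (d j) (d j) ℝ}
  (hA : ∀ j, (A j).PosDef) (hAG : ∀ j, (G j - A j).PosSemidef) (hMA : (mTilde B c Q A).PosDef)
  (hmin : ∀ X : ∀ j, Matrix (d j) (d j) ℝ, (∀ j, (X j).PosDef) → (∀ j, (G j - X j).PosSemidef) →
    (mTilde B c Q X).PosDef → functional B c Q A ≤ functional B c Q X)
include hA hAG hMA hmin

theorem trace_partialGrad_mul_nonneg (j : ι) {D : Matrix (d j) (d j) ℝ} (hD : D.IsHermitian)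
    (hfeas : IsFeasibleDirection (G j) (A j) D) : 0 ≤ (partialGrad B c Q A j * D).trace := by
  refine (hasDerivAt_functional_update B c Q (hA j).isUnit hMA.isUnit D).nonneg_of_eventually_le ?_
  have hE : (c j • ((B j)ᵀ * D * B j)).IsHermitian := by
    have := isHermitian_conjTranspose_mul_mul (B j) hD
    rw [conjTranspose_eq_transpose_of_trivial] at this
    exact this.smul (.all _)
  filter_upwards [hfeas, nhdsWithin_le_nhds (hMA.eventually_add_smul hE)] with t ⟨hpos, hle⟩ hM
  simp only [zero_smul, add_zero, update_eq_self]
  refine hmin _ ?_ ?_ (by rwa [mTilde_update])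
  · exact (forall_update_iff A fun k Y => Y.PosDef).2 ⟨hpos, fun k _ => hA k⟩
  · exact (forall_update_iff A fun k Y => (G k - Y).PosSemidef).2 ⟨hle, fun k _ => hAG k⟩

theorem posSemidef_neg_partialGrad (j : ι) : (-partialGrad B c Q A j).PosSemidef := by
  refine .of_dotProduct_mulVec_nonneg
    (isHermitian_partialGrad B c Q (hA j).isHermitian hMA.isHermitian).neg fun x => ?_
  have hx := posSemidef_vecMulVec_self_star x
  have := trace_partialGrad_mul_nonneg hA hAG hMA hmin j hx.isHermitian.neg
    (isFeasibleDirection_neg (hA j) (hAG j) hx)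
  rw [Matrix.mul_neg, trace_neg, mul_vecMulVec, trace_vecMulVec] at this
  simpa [neg_mulVec, dotProduct_comm] using this

theorem partialGrad_mul_sub_eq_zero (j : ι) : partialGrad B c Q A j * (G j - A j) = 0 := by
  have hGA := hAG j
  have h₁ := trace_partialGrad_mul_nonneg hA hAG hMA hmin j hGA.isHermitian
    (isFeasibleDirection_sub_self (hA j) hGA)
  have h₂ := trace_partialGrad_mul_nonneg hA hAG hMA hmin j hGA.isHermitian.neg
    (isFeasibleDirection_neg (hA j) hGA hGA)
  rw [Matrix.mul_neg, trace_neg, neg_nonneg] at h₂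
  have := (posSemidef_neg_partialGrad hA hAG hMA hmin j).mul_eq_zero_of_trace_mul_eq_zero hGA
    (by rw [Matrix.neg_mul, trace_neg, le_antisymm h₂ h₁, neg_zero])
  rwa [Matrix.neg_mul, neg_eq_zero] at this

end Optimality

end BrascampLieb

theorem stmt13_general (n m : ℕ) (nj : Fin m → ℕ)
    (B : ∀ j : Fin m, Matrix (Fin (nj j)) (Fin n) ℝ)
    (c : Fin m → ℝ) (hc : ∀ j, c j ≠ 0)
    (Q : Matrix (Fin n) (Fin n) ℝ)
    (G A : ∀ j : Fin m, Matrix (Fin (nj j)) (Fin (nj j)) ℝ)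
    (hA : ∀ j, (A j).PosDef) (hAG : ∀ j, (G j - A j).PosSemidef)
    (hMA : (∑ j, c j • ((B j)ᵀ * A j * B j) + Q).PosDef)
    (hmin : ∀ X : ∀ j : Fin m, Matrix (Fin (nj j)) (Fin (nj j)) ℝ,
      (∀ j, (X j).PosDef) → (∀ j, (G j - X j).PosSemidef) →
      ((∑ j, c j • ((B j)ᵀ * X j * B j) + Q).PosDef) →
      (∑ j, c j * Real.log (A j).det)
          - Real.log (∑ j, c j • ((B j)ᵀ * A j * B j) + Q).det
        ≤ (∑ j, c j * Real.log (X j).det)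
          - Real.log (∑ j, c j • ((B j)ᵀ * X j * B j) + Q).det) :
    ∀ j : Fin m,
      (-(c j • ((A j)⁻¹ - B j * (∑ k, c k • ((B k)ᵀ * A k * B k) + Q)⁻¹ * (B j)ᵀ))).PosSemidef
      ∧ ((A j)⁻¹ - B j * (∑ k, c k • ((B k)ᵀ * A k * B k) + Q)⁻¹ * (B j)ᵀ) * (G j - A j) = 0 := by
  intro j
  refine ⟨BrascampLieb.posSemidef_neg_partialGrad hA hAG hMA hmin j, ?_⟩
  have h := BrascampLieb.partialGrad_mul_sub_eq_zero hA hAG hMA hmin j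
  rw [BrascampLieb.partialGrad, smul_mul_assoc, smul_eq_zero] at h
  exact h.resolve_left (hc j)

/-- First-order optimality conditions for the gaussian Brascamp–Lieb functional. -/
theorem stmt13 (n m : ℕ) (nj : Fin m → ℕ)
    (B : ∀ j : Fin m, Matrix (Fin (nj j)) (Fin n) ℝ)
    (hBsurj : ∀ j, Function.Surjective (fun x : Fin n → ℝ => (B j).mulVec x))
    (c : Fin m → ℝ) (hc : ∀ j, c j ≠ 0)
    (Q : Matrix (Fin n) (Fin n) ℝ) (hQ : Q.IsHermitian)
    (G A : ∀ j : Fin m, Matrix (Fin (nj j)) (Fin (nj j)) ℝ)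
    (hG : ∀ j, (G j).PosDef)
    (hA : ∀ j, (A j).PosDef) (hAG : ∀ j, (G j - A j).PosSemidef)
    (hMA : (∑ j, c j • ((B j)ᵀ * A j * B j) + Q).PosDef)
    (hmin : ∀ X : ∀ j : Fin m, Matrix (Fin (nj j)) (Fin (nj j)) ℝ,
      (∀ j, (X j).PosDef) → (∀ j, (G j - X j).PosSemidef) →
      ((∑ j, c j • ((B j)ᵀ * X j * B j) + Q).PosDef) →
      (∑ j, c j * Real.log (A j).det)
          - Real.log (∑ j, c j • ((B j)ᵀ * A j * B j) + Q).det
        ≤ (∑ j, c j * Real.log (X j).det)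
          - Real.log (∑ j, c j • ((B j)ᵀ * X j * B j) + Q).det) :
    ∀ j : Fin m,
      (-(c j • ((A j)⁻¹ - B j * (∑ k, c k • ((B k)ᵀ * A k * B k) + Q)⁻¹ * (B j)ᵀ))).PosSemidef
      ∧ ((A j)⁻¹ - B j * (∑ k, c k • ((B k)ᵀ * A k * B k) + Q)⁻¹ * (B j)ᵀ) * (G j - A j) = 0 :=
  stmt13_general n m nj B c hc Q G A hA hAG hMA hmin
end

section
/- One-dimensional regularized Prékopa--Leindler minimization: let $c_1,c_2\in(0,1)$ with $c_1+c_2<1$ and $\sigma_1,\sigma_2>0$, and define $\Phi(a_1,a_2)=a_1^{c_1}a_2^{c_2}\big(\frac{c_1}{a_1}+\frac{c_2}{a_2}\big)$ for $a_1,a_2>0$. Then $\inf\{\Phi(a_1,a_2): 0<a_1\le\sigma_1^{-1},\ 0<a_2\le\sigma_2^{-1}\}=\Phi(\sigma_1^{-1},\sigma_2^{-1})$ if and only if $c_1\sigma_1+c_2\sigma_2\le\min\{\sigma_1,\sigma_2\}$. -/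
/-!
Put `tᵢ = aᵢσᵢ ∈ (0, 1]` and `D = c₁σ₁ + c₂σ₂`. Then `Φ(a) = Φ(σ⁻¹) · t₁^c₁ t₂^c₂ (l/t₁ + m/t₂)`
with weights `l = c₁σ₁/D`, `m = c₂σ₂/D`, and weighted AM-GM bounds the last factor below by
`t₁^(c₁-l) t₂^(c₂-m)`. If `D ≤ min σ₁ σ₂` then `cᵢ ≤` the weights, so this is `≥ 1`.

Conversely, on the edge `a₁ = σ₁⁻¹` the function `Φ(σ₁⁻¹, ·)` has a strict global minimum at
its critical point `(1 - c₂)/(c₁σ₁)` (Bernoulli's inequality), which lies strictly inside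
`(0, σ₂⁻¹)` as soon as `σ₂ < D`; the case `σ₁ < D` is symmetric.
-/

open Real Set

noncomputable def phi (c1 c2 a1 a2 : ℝ) : ℝ := a1 ^ c1 * a2 ^ c2 * (c1 / a1 + c2 / a2)

lemma phi_comm (c1 c2 a1 a2 : ℝ) : phi c1 c2 a1 a2 = phi c2 c1 a2 a1 := by
  unfold phi; ring

lemma phi_pos {c1 c2 a1 a2 : ℝ} (hc1 : 0 < c1) (hc2 : 0 < c2) (ha1 : 0 < a1) (ha2 : 0 < a2) :
    0 < phi c1 c2 a1 a2 := by
  unfold phi; positivity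

lemma one_le_rpow_mul_rpow_mul_add {c1 c2 l m t u : ℝ} (hl : 0 ≤ l) (hm : 0 ≤ m)
    (hlm : l + m = 1) (hc1 : c1 ≤ l) (hc2 : c2 ≤ m) (ht : 0 < t) (ht1 : t ≤ 1) (hu : 0 < u)
    (hu1 : u ≤ 1) : 1 ≤ t ^ c1 * u ^ c2 * (l / t + m / u) := by
  have amgm : t⁻¹ ^ l * u⁻¹ ^ m ≤ l * t⁻¹ + m * u⁻¹ :=
    geom_mean_le_arith_mean2_weighted hl hm (by positivity) (by positivity) hlm
  calc 1 ≤ t ^ (c1 - l) * u ^ (c2 - m) :=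
        one_le_mul_of_one_le_of_one_le
          (one_le_rpow_of_pos_of_le_one_of_nonpos ht ht1 (by linarith))
          (one_le_rpow_of_pos_of_le_one_of_nonpos hu hu1 (by linarith))
    _ = t ^ c1 * u ^ c2 * (t⁻¹ ^ l * u⁻¹ ^ m) := by
        rw [rpow_sub ht, rpow_sub hu, inv_rpow ht.le, inv_rpow hu.le]; ring
    _ ≤ t ^ c1 * u ^ c2 * (l / t + m / u) := by
        rw [div_eq_mul_inv, div_eq_mul_inv]; gcongr

lemma phi_inv_inv_le_phi {c1 c2 σ1 σ2 a1 a2 : ℝ} (hc1 : 0 < c1) (hc2 : 0 < c2)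
    (hσ1 : 0 < σ1) (hσ2 : 0 < σ2) (h : c1 * σ1 + c2 * σ2 ≤ min σ1 σ2)
    (ha1 : a1 ∈ Ioc 0 σ1⁻¹) (ha2 : a2 ∈ Ioc 0 σ2⁻¹) :
    phi c1 c2 σ1⁻¹ σ2⁻¹ ≤ phi c1 c2 a1 a2 := by
  obtain ⟨ha1, ha1'⟩ := ha1
  obtain ⟨ha2, ha2'⟩ := ha2
  set D := c1 * σ1 + c2 * σ2
  have hD : 0 < D := by positivity
  have hD_le := le_min_iff.1 h
  have ht1 : a1 * σ1 ≤ 1 :=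
    (mul_le_mul_of_nonneg_right ha1' hσ1.le).trans_eq (inv_mul_cancel₀ hσ1.ne')
  have hu1 : a2 * σ2 ≤ 1 :=
    (mul_le_mul_of_nonneg_right ha2' hσ2.le).trans_eq (inv_mul_cancel₀ hσ2.ne')
  have key := one_le_rpow_mul_rpow_mul_add (l := c1 * σ1 / D) (m := c2 * σ2 / D)
    (by positivity) (by positivity) (by field_simp; rfl)
    (by rw [le_div_iff₀ hD]; nlinarith) (by rw [le_div_iff₀ hD]; nlinarith)
    (by positivity) ht1 (by positivity) hu1
  have expand : phi c1 c2 a1 a2 = phi c1 c2 σ1⁻¹ σ2⁻¹ * ((a1 * σ1) ^ c1 * (a2 * σ2) ^ c2 *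
      (c1 * σ1 / D / (a1 * σ1) + c2 * σ2 / D / (a2 * σ2))) := by
    unfold phi
    rw [mul_rpow ha1.le hσ1.le, mul_rpow ha2.le hσ2.le, inv_rpow hσ1.le, inv_rpow hσ2.le]
    have : σ1 ^ c1 ≠ 0 := by positivity
    have : σ2 ^ c2 ≠ 0 := by positivity
    field_simp
    rfl
  rw [expand]
  exact le_mul_of_one_le_right (phi_pos hc1 hc2 (by positivity) (by positivity)).le key

lemma one_lt_rpow_sub_one_mul {p s : ℝ} (hp0 : 0 < p) (hp1 : p < 1) (hs : 0 < s) (hs1 : s ≠ 1) :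
    1 < s ^ (p - 1) * ((1 - p) * s + p) := by
  have bernoulli : s ^ (1 - p) < (1 - p) * s + p := by
    have := rpow_one_add_lt_one_add_mul_self (s := s - 1) (by linarith) (sub_ne_zero.2 hs1)
      (p := 1 - p) (by linarith) (by linarith)
    rw [add_sub_cancel] at this
    linarith
  calc 1 = s ^ (p - 1) * s ^ (1 - p) := by rw [← rpow_add hs]; norm_num
    _ < s ^ (p - 1) * ((1 - p) * s + p) := by gcongr

lemma phi_lt_phi_of_critical {c1 c2 x a b : ℝ} (hc1 : 0 < c1) (hc2 : 0 < c2) (hc2' : c2 < 1)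
    (hx : 0 < x) (ha : c1 * a = (1 - c2) * x) (hb : 0 < b) (hba : b ≠ a) :
    phi c1 c2 x a < phi c1 c2 x b := by
  have ha0 : 0 < a := by nlinarith
  obtain ⟨s, rfl⟩ : ∃ s, b = a * s := ⟨b / a, by field_simp⟩
  have hs : 0 < s := pos_of_mul_pos_right hb ha0.le
  have scaling : phi c1 c2 x (a * s) = phi c1 c2 x a * (s ^ (c2 - 1) * ((1 - c2) * s + c2)) := by
    unfold phi
    rw [mul_rpow ha0.le hs.le, rpow_sub hs, rpow_one]
    field_simp
    rw [ha]
    ring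
  rw [scaling]
  refine lt_mul_of_one_lt_right (phi_pos hc1 hc2 hx ha0) (one_lt_rpow_sub_one_mul hc2 hc2' hs ?_)
  rintro rfl
  exact hba (mul_one a)

lemma exists_phi_lt_phi_inv_inv_right {c1 c2 σ1 σ2 : ℝ} (hc1 : 0 < c1) (hc2 : c2 ∈ Ioo 0 1)
    (hσ1 : 0 < σ1) (hσ2 : 0 < σ2) (h : σ2 < c1 * σ1 + c2 * σ2) :
    ∃ a2 ∈ Ioc 0 σ2⁻¹, phi c1 c2 σ1⁻¹ a2 < phi c1 c2 σ1⁻¹ σ2⁻¹ := by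
  obtain ⟨hc2, hc2'⟩ := hc2
  have hcrit : c1 * ((1 - c2) * σ1⁻¹ / c1) = (1 - c2) * σ1⁻¹ := by field_simp
  have hlt : (1 - c2) * σ1⁻¹ / c1 < σ2⁻¹ := by
    rw [div_lt_iff₀ hc1, ← div_eq_inv_mul, ← div_eq_mul_inv, div_lt_div_iff₀ hσ1 hσ2]
    linarith
  refine ⟨(1 - c2) * σ1⁻¹ / c1, ⟨by have := sub_pos.2 hc2'; positivity, hlt.le⟩, ?_⟩
  exact phi_lt_phi_of_critical hc1 hc2 hc2' (inv_pos.2 hσ1) hcrit (inv_pos.2 hσ2) hlt.ne'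

lemma exists_phi_lt_phi_inv_inv {c1 c2 σ1 σ2 : ℝ} (hc1 : c1 ∈ Ioo 0 1) (hc2 : c2 ∈ Ioo 0 1)
    (hσ1 : 0 < σ1) (hσ2 : 0 < σ2) (h : min σ1 σ2 < c1 * σ1 + c2 * σ2) :
    ∃ a1 ∈ Ioc 0 σ1⁻¹, ∃ a2 ∈ Ioc 0 σ2⁻¹, phi c1 c2 a1 a2 < phi c1 c2 σ1⁻¹ σ2⁻¹ := by
  rcases min_lt_iff.1 h with h1 | h2
  · obtain ⟨a1, ha1, hlt⟩ := exists_phi_lt_phi_inv_inv_right hc2.1 hc1 hσ2 hσ1 (by linarith)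
    refine ⟨a1, ha1, σ2⁻¹, ⟨inv_pos.2 hσ2, le_rfl⟩, ?_⟩
    rwa [phi_comm, phi_comm c1]
  · obtain ⟨a2, ha2, hlt⟩ := exists_phi_lt_phi_inv_inv_right hc1.1 hc2 hσ1 hσ2 h2
    exact ⟨σ1⁻¹, ⟨inv_pos.2 hσ1, le_rfl⟩, a2, ha2, hlt⟩

theorem stmt15_general (c1 c2 σ1 σ2 : ℝ) (hc1 : c1 ∈ Set.Ioo (0:ℝ) 1) (hc2 : c2 ∈ Set.Ioo (0:ℝ) 1)
    (hσ1 : 0 < σ1) (hσ2 : 0 < σ2) :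
    sInf {y : ℝ | ∃ a1 a2 : ℝ, 0 < a1 ∧ a1 ≤ σ1⁻¹ ∧ 0 < a2 ∧ a2 ≤ σ2⁻¹ ∧
        y = a1 ^ c1 * a2 ^ c2 * (c1 / a1 + c2 / a2)}
      = σ1⁻¹ ^ c1 * σ2⁻¹ ^ c2 * (c1 / σ1⁻¹ + c2 / σ2⁻¹)
    ↔ c1 * σ1 + c2 * σ2 ≤ min σ1 σ2 := by
  set S := {y : ℝ | ∃ a1 a2 : ℝ, 0 < a1 ∧ a1 ≤ σ1⁻¹ ∧ 0 < a2 ∧ a2 ≤ σ2⁻¹ ∧ y = phi c1 c2 a1 a2}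
  change sInf S = phi c1 c2 σ1⁻¹ σ2⁻¹ ↔ _
  have hmem : phi c1 c2 σ1⁻¹ σ2⁻¹ ∈ S :=
    ⟨_, _, inv_pos.2 hσ1, le_rfl, inv_pos.2 hσ2, le_rfl, rfl⟩
  have hbdd : BddBelow S := ⟨0, by
    rintro _ ⟨a1, a2, ha1, -, ha2, -, rfl⟩
    exact (phi_pos hc1.1 hc2.1 ha1 ha2).le⟩
  rw [← (csInf_le hbdd hmem).ge_iff_eq, le_csInf_iff hbdd ⟨_, hmem⟩]
  constructor
  · intro hlow
    by_contra! hmin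
    obtain ⟨a1, ⟨ha1, ha1'⟩, a2, ⟨ha2, ha2'⟩, hlt⟩ := exists_phi_lt_phi_inv_inv hc1 hc2 hσ1 hσ2 hmin
    exact hlt.not_ge (hlow _ ⟨a1, a2, ha1, ha1', ha2, ha2', rfl⟩)
  · rintro h _ ⟨a1, a2, ha1, ha1', ha2, ha2', rfl⟩
    exact phi_inv_inv_le_phi hc1.1 hc2.1 hσ1 hσ2 h ⟨ha1, ha1'⟩ ⟨ha2, ha2'⟩

/-- One-dimensional regularized Prékopa–Leindler minimization. -/
theorem stmt15 (c1 c2 σ1 σ2 : ℝ) (hc1 : c1 ∈ Set.Ioo (0:ℝ) 1) (hc2 : c2 ∈ Set.Ioo (0:ℝ) 1)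
    (hsum : c1 + c2 < 1) (hσ1 : 0 < σ1) (hσ2 : 0 < σ2) :
    sInf {y : ℝ | ∃ a1 a2 : ℝ, 0 < a1 ∧ a1 ≤ σ1⁻¹ ∧ 0 < a2 ∧ a2 ≤ σ2⁻¹ ∧
        y = a1 ^ c1 * a2 ^ c2 * (c1 / a1 + c2 / a2)}
      = σ1⁻¹ ^ c1 * σ2⁻¹ ^ c2 * (c1 / σ1⁻¹ + c2 / σ2⁻¹)
    ↔ c1 * σ1 + c2 * σ2 ≤ min σ1 σ2 :=
  stmt15_general c1 c2 σ1 σ2 hc1 hc2 hσ1 hσ2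
end

section
/- Lower bound for slowly decaying initial data under gaussian convolution: if $P$ is positive definite on $\mathbb{R}^n$ and $h(y)\ge c_0(1+|y|^2)^{-n}$ for all $y$ with some $c_0>0$, then there is $C<\infty$ (depending on $P,c_0,n$) such that $(g_P*h)(x)\ge C^{-1}(1+|x|^2)^{-n}$ for all $x\in\mathbb{R}^n$, where $g_P(x)=(\det P)^{1/2}e^{-\pi\langle x,Px\rangle}$. -/
/-!
Restrict the integral to the cube `‖y - x‖_∞ ≤ 1`. On it the gaussian factor is bounded below by a
positive constant (a continuous positive function on a compact set), and
`1 + |y|² ≤ 2 (n + 1) (1 + |x|²)`, so `h y ≥ c₀ (2 (n + 1))⁻ⁿ (1 + |x|²)⁻ⁿ`; the cube's volume does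
not depend on `x`.
-/

open Matrix MeasureTheory

theorem dotProduct_self_le_of_dist_le_one {ι : Type*} [Fintype ι] {x y : ι → ℝ}
    (hxy : dist y x ≤ 1) : y ⬝ᵥ y ≤ 2 * (x ⬝ᵥ x) + 2 * Fintype.card ι := by
  have hcoord : ∀ i, y i * y i ≤ 2 * (x i * x i) + 2 := fun i => by
    have hi : |y i - x i| ≤ 1 := (Real.dist_eq _ _).symm.trans_le ((dist_le_pi_dist y x i).trans hxy)
    obtain ⟨hl, hr⟩ := abs_le.mp hi
    nlinarith [sq_nonneg (y i - 2 * x i)]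
  calc y ⬝ᵥ y = ∑ i, y i * y i := rfl
    _ ≤ ∑ i, (2 * (x i * x i) + 2) := Finset.sum_le_sum fun i _ => hcoord i
    _ = 2 * (x ⬝ᵥ x) + 2 * Fintype.card ι := by
      simp [Finset.sum_add_distrib, Finset.mul_sum, dotProduct, mul_comm]

theorem mul_rpow_neg_one_add_dotProduct_self_le {ι : Type*} [Fintype ι] {x y : ι → ℝ}
    (hxy : dist y x ≤ 1) {s : ℝ} (hs : 0 ≤ s) :
    (2 * (Fintype.card ι + 1)) ^ (-s) * (1 + x ⬝ᵥ x) ^ (-s) ≤ (1 + y ⬝ᵥ y) ^ (-s) := by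
  have hx : 0 ≤ x ⬝ᵥ x := dotProduct_self_star_nonneg x
  have hy : 0 ≤ y ⬝ᵥ y := dotProduct_self_star_nonneg y
  rw [← Real.mul_rpow (by positivity) (by positivity)]
  refine Real.rpow_le_rpow_of_nonpos (by positivity) ?_ (neg_nonpos.mpr hs)
  nlinarith [dotProduct_self_le_of_dist_le_one hxy]

theorem continuous_dotProduct_mulVec {ι : Type*} [Fintype ι] (P : Matrix ι ι ℝ) :
    Continuous fun v : ι → ℝ => v ⬝ᵥ P *ᵥ v := by
  simp only [dotProduct, mulVec]
  fun_prop

theorem exists_pos_le_exp_neg_dotProduct_mulVec_on_closedBall {ι : Type*} [Fintype ι]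
    (P : Matrix ι ι ℝ) (r : ℝ) :
    ∃ E > 0, ∀ v ∈ Metric.closedBall (0 : ι → ℝ) r, E ≤ Real.exp (-Real.pi * (v ⬝ᵥ P *ᵥ v)) := by
  rcases (Metric.closedBall (0 : ι → ℝ) r).eq_empty_or_nonempty with hempty | hne
  · exact ⟨1, one_pos, by simp [hempty]⟩
  obtain ⟨v₀, -, hmin⟩ := (isCompact_closedBall (0 : ι → ℝ) r).exists_isMinOn hne
    (Real.continuous_exp.comp (continuous_const.mul (continuous_dotProduct_mulVec P))).continuousOn
  exact ⟨_, Real.exp_pos _, fun v hv => hmin hv⟩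

theorem Matrix.PosSemidef.integrable_exp_neg_dotProduct_mulVec_sub_mul {ι : Type*} [Fintype ι]
    {P : Matrix ι ι ℝ} (hP : P.PosSemidef) {h : (ι → ℝ) → ℝ} (hh : Integrable h) (x : ι → ℝ) :
    Integrable fun y => Real.exp (-Real.pi * ((x - y) ⬝ᵥ P *ᵥ (x - y))) * h y := by
  refine hh.bdd_mul (c := 1) ?_ (Filter.Eventually.of_forall fun y => ?_)
  · exact (Real.continuous_exp.comp (continuous_const.mul
      ((continuous_dotProduct_mulVec P).comp (continuous_const.sub continuous_id)))).aestronglyMeasurable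
  · rw [Real.norm_eq_abs, Real.abs_exp, Real.exp_le_one_iff]
    have hq : 0 ≤ (x - y) ⬝ᵥ P *ᵥ (x - y) := hP.dotProduct_mulVec_nonneg (x - y)
    nlinarith [Real.pi_pos]

theorem mul_measureReal_le_integral_of_le_on {X : Type*} [MeasurableSpace X] {μ : Measure X}
    {f : X → ℝ} {s : Set X} {c : ℝ} (hs : MeasurableSet s) (hμs : μ s ≠ ⊤)
    (hf : Integrable f μ) (hf0 : 0 ≤ f) (hc : ∀ x ∈ s, c ≤ f x) :
    c * μ.real s ≤ ∫ x, f x ∂μ :=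
  (setIntegral_ge_of_const_le_real hs hμs hc hf.integrableOn).trans
    (setIntegral_le_integral hf (Filter.Eventually.of_forall hf0))

/-- Lower bound for slowly decaying initial data under gaussian convolution. -/
theorem stmt19 (n : ℕ) (P : Matrix (Fin n) (Fin n) ℝ) (hP : P.PosDef)
    (c0 : ℝ) (hc0 : 0 < c0)
    (h : (Fin n → ℝ) → ℝ) (hh : Integrable h)
    (hlb : ∀ y, c0 * (1 + y ⬝ᵥ y) ^ (-(n : ℝ)) ≤ h y) :
    ∃ C : ℝ, 0 < C ∧ ∀ x,
      C⁻¹ * (1 + x ⬝ᵥ x) ^ (-(n : ℝ)) ≤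
        ∫ y, P.det ^ ((1:ℝ)/2) *
          Real.exp (-Real.pi * ((x - y) ⬝ᵥ (P.mulVec (x - y)))) * h y := by
  have hh0 : 0 ≤ h := fun y =>
    (mul_nonneg hc0.le (Real.rpow_nonneg (by positivity [dotProduct_self_star_nonneg y]) _)).trans (hlb y)
  obtain ⟨E, hE, hexp⟩ := exists_pos_le_exp_neg_dotProduct_mulVec_on_closedBall P 1
  set K : ℝ := (2 * (n + 1)) ^ (-(n : ℝ))
  set V := volume.real (Metric.closedBall (0 : Fin n → ℝ) 1)
  have hV : 0 < V := ENNReal.toReal_pos (Metric.measure_closedBall_pos _ _ one_pos).ne'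
    measure_closedBall_lt_top.ne
  have hD : 0 < P.det ^ ((1:ℝ)/2) := Real.rpow_pos_of_pos hP.det_pos _
  refine ⟨(P.det ^ ((1:ℝ)/2) * c0 * E * K * V)⁻¹, by positivity, fun x => ?_⟩
  have hbound : ∀ y ∈ Metric.closedBall x 1, E * (c0 * (K * (1 + x ⬝ᵥ x) ^ (-(n : ℝ)))) ≤
      Real.exp (-Real.pi * ((x - y) ⬝ᵥ P *ᵥ (x - y))) * h y := fun y hy => by
    have hxy : x - y ∈ Metric.closedBall 0 1 := by
      rwa [mem_closedBall_zero_iff, ← dist_eq_norm, dist_comm]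
    have hw := mul_rpow_neg_one_add_dotProduct_self_le hy (Nat.cast_nonneg n)
    rw [Fintype.card_fin] at hw
    exact mul_le_mul_of_nonneg (hexp _ hxy) ((mul_le_mul_of_nonneg_left hw hc0.le).trans (hlb y))
      hE.le (hh0 y)
  rw [inv_inv]
  calc P.det ^ ((1:ℝ)/2) * c0 * E * K * V * (1 + x ⬝ᵥ x) ^ (-(n : ℝ))
      = P.det ^ ((1:ℝ)/2) * (E * (c0 * (K * (1 + x ⬝ᵥ x) ^ (-(n : ℝ)))) *
          volume.real (Metric.closedBall x 1)) := by
        rw [Measure.addHaar_real_closedBall_center]; ring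
    _ ≤ P.det ^ ((1:ℝ)/2) * ∫ y, Real.exp (-Real.pi * ((x - y) ⬝ᵥ P *ᵥ (x - y))) * h y := by
        gcongr
        exact mul_measureReal_le_integral_of_le_on measurableSet_closedBall
          measure_closedBall_lt_top.ne (hP.posSemidef.integrable_exp_neg_dotProduct_mulVec_sub_mul hh x)
          (fun y => mul_nonneg (Real.exp_pos _).le (hh0 y)) hbound
    _ = _ := by rw [← integral_const_mul]; simp_rw [mul_assoc]
end
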